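/- arXiv:1501.03561 — 4 statements merged into one kernel-verified Lean document; each statement's English description precedes it below -/
import Mathlib

section
/- For m ≥ 1 and 1 ≤ p < n, the following identity of polynomials holds: q_m(x_p, y_{p+1}, x_{p+1}, y_{p+2}, …, y_n, x_n | a) − q_m(x_{p+1}, y_{p+2}, x_{p+2}, …, y_n, x_n | a) = (x_p + y_{p+1}) · q_{m−1}(x_p, sh x_{p+1}, y_{p+2}, x_{p+2}, …, y_n, x_n | a), where the shift operator sh increases by 1 the index of the parameter a in every linear factor associated with a variable to its right. -/
open Finset

noncomputable section
open Classical

variable {R : Type*} [CommRing R]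

/-- Index data for a term of `q_m(x_p, …, y_n, x_n | a)`: a weakly increasing sequence
`p ≤ i_1 ≤ ⋯ ≤ i_m ≤ n` together with a choice of primed (`true`) positions, where a
primed entry (a `y`-factor) is only allowed for values `≥ q`, at most one primed entry
occurs for each value, and among equal values the primed one comes first (alphabet
`q' < q < (q+1)' < (q+1) < ⋯`). -/
def QIdx (m p q n : ℕ) : Finset (Fin m → ℕ × Bool) :=
  (Fintype.piFinset fun _ : Fin m => Finset.Icc p n ×ˢ (Finset.univ : Finset Bool)).filter
    fun f =>
      (∀ r s : Fin m, r ≤ s → (f r).1 ≤ (f s).1) ∧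
      (∀ r : Fin m, (f r).2 = true → q ≤ (f r).1) ∧
      (∀ r s : Fin m, (f r).2 = true → (f s).1 = (f r).1 → r ≤ s)

/-- The term of `q_m` attached to such index data: the `r`-th factor is
`(x_{i_r} + a_{r + sh(i_r)})` or `(y_{i_r} - a_{r + sh(i_r)})`, where `sh i` counts the
shift operators standing to the left of the variable with index `i`. -/
def qTerm {m : ℕ} (sh : ℕ → ℕ) (x y a : ℕ → R) (f : Fin m → ℕ × Bool) : R :=
  ∏ r : Fin m,
    if (f r).2 then y (f r).1 - a (r.1 + 1 + sh (f r).1)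
    else x (f r).1 + a (r.1 + 1 + sh (f r).1)

/-- `q_m` for the alphabet `x_p, …, x_{q-1}, y_q, x_q, y_{q+1}, x_{q+1}, …, y_n, x_n`,
with shift pattern `sh`. -/
def qfun (m p q n : ℕ) (sh : ℕ → ℕ) (x y a : ℕ → R) : R :=
  ∑ f ∈ QIdx m p q n, qTerm sh x y a f



lemma aux_succAbove_val {k : ℕ} (j : Fin (k+1)) (i : Fin k) :
    (j.succAbove i).1 = if i.1 < j.1 then i.1 else i.1 + 1 := by
  rw [Fin.succAbove]
  split_ifs with h1 h2 h2
  · rfl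
  · exact absurd (by simpa [Fin.lt_def] using h1) h2
  · exact absurd (by simpa [Fin.lt_def] using h2) h1
  · rfl

lemma aux_mem_iff_lt_card {N : ℕ} (S : Finset (Fin N))
    (h : ∀ r s : Fin N, r ≤ s → s ∈ S → r ∈ S) (i : Fin N) : i ∈ S ↔ i.1 < S.card := by
  constructor
  · intro hi
    have hsub : Finset.Iic i ⊆ S := fun r hr => h r i (Finset.mem_Iic.1 hr) hi
    have := Finset.card_le_card hsub
    rw [Fin.card_Iic] at this
    omega
  · intro hlt
    by_contra hi
    have hsub : S ⊆ Finset.Iio i := fun s hs => Finset.mem_Iio.2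
      (lt_of_not_ge fun hle => hi (h i s hle hs))
    have := Finset.card_le_card hsub
    rw [Fin.card_Iio] at this
    omega

lemma aux_card_eq_of_iff {N c : ℕ} (S : Finset (Fin N)) (hc : c ≤ N)
    (hiff : ∀ i : Fin N, i ∈ S ↔ i.1 < c) : S.card = c := by
  have hdc : ∀ r s : Fin N, r ≤ s → s ∈ S → r ∈ S := by
    intro r s hrs hs
    rw [hiff] at *
    have := Fin.le_def.1 hrs
    omega
  have hm := aux_mem_iff_lt_card S hdc
  by_contra hne
  have hcard : S.card ≤ N := le_trans (Finset.card_le_card (Finset.subset_univ S)) (by simp)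
  rcases Nat.lt_or_ge S.card c with hlt | hge
  · have : (⟨S.card, lt_of_lt_of_le hlt hc⟩ : Fin N) ∈ S := (hiff _).2 hlt
    rw [hm] at this; simp at this
  · have hcc : c < S.card := by omega
    have : (⟨c, lt_of_lt_of_le hcc hcard⟩ : Fin N) ∈ S := (hm _).2 hcc
    rw [hiff] at this; simp at this

lemma aux_mem_QIdx {m p q n : ℕ} (f : Fin m → ℕ × Bool) :
    f ∈ QIdx m p q n ↔
      (∀ r, p ≤ (f r).1 ∧ (f r).1 ≤ n) ∧
      (∀ r s, r ≤ s → (f r).1 ≤ (f s).1) ∧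
      (∀ r, (f r).2 = true → q ≤ (f r).1) ∧
      (∀ r s, (f r).2 = true → (f s).1 = (f r).1 → r ≤ s) := by
  simp [QIdx, Fintype.mem_piFinset, Finset.mem_Icc, and_assoc]

def auxPos {k : ℕ} (p : ℕ) (f : Fin k → ℕ × Bool) : ℕ :=
  (Finset.univ.filter fun r => (f r).1 = p ∨ f r = (p+1, true)).card

lemma auxPos_le {k p : ℕ} (f : Fin k → ℕ × Bool) : auxPos p f ≤ k :=
  le_trans (Finset.card_filter_le _ _) (by simp)

def auxE (p : ℕ) (b : Bool) : ℕ × Bool := if b then (p+1, true) else (p, false)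

def auxJ {k : ℕ} (p : ℕ) (g : Fin k → ℕ × Bool) : Fin (k+1) :=
  ⟨auxPos p g, Nat.lt_succ_of_le (auxPos_le g)⟩

def auxIns {k : ℕ} (p : ℕ) (g : Fin k → ℕ × Bool) (b : Bool) : Fin (k+1) → ℕ × Bool :=
  Fin.insertNth (auxJ p g) (auxE p b) g

def auxD {k : ℕ} (p : ℕ) (f : Fin (k+1) → ℕ × Bool) : Fin (k+1) :=
  ⟨auxPos p f - 1, by have := auxPos_le (p := p) f; omega⟩

def auxDel {k : ℕ} (p : ℕ) (f : Fin (k+1) → ℕ × Bool) : Fin k → ℕ × Bool :=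
  Fin.removeNth (auxD p f) f

def auxB {k : ℕ} (p : ℕ) (f : Fin (k+1) → ℕ × Bool) : Bool := (f (auxD p f)).2

lemma auxPos_spec {m p q n : ℕ} {f : Fin m → ℕ × Bool} (hf : f ∈ QIdx m p q n) (r : Fin m) :
    ((f r).1 = p ∨ f r = (p+1, true)) ↔ r.1 < auxPos p f := by
  rw [aux_mem_QIdx] at hf
  obtain ⟨hb, hmono, hpr, h3⟩ := hf
  have hdc : ∀ r s : Fin m, r ≤ s →
      s ∈ (Finset.univ.filter fun r => (f r).1 = p ∨ f r = (p+1, true)) →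
      r ∈ (Finset.univ.filter fun r => (f r).1 = p ∨ f r = (p+1, true)) := by
    intro r s hrs hs
    simp only [Finset.mem_filter, Finset.mem_univ, true_and] at hs ⊢
    rcases hs with h | h
    · left
      have h1 := hmono r s hrs
      have h2 := (hb r).1
      omega
    · have h1 := hmono r s hrs
      have h2 := (hb r).1
      rw [h] at h1
      rcases (by omega : (f r).1 = p ∨ (f r).1 = p + 1) with h' | h'
      · exact Or.inl h'
      · right
        have hsr : s ≤ r := h3 s r (by rw [h]) (by rw [h]; exact h')
        have : r = s := le_antisymm hrs hsr
        rw [this]; exact h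
  have := aux_mem_iff_lt_card _ hdc r
  simpa [auxPos] using this

lemma auxPos_ge {m p q n : ℕ} {f : Fin m → ℕ × Bool} (hf : f ∈ QIdx m p q n) (r : Fin m)
    (h : auxPos p f ≤ r.1) : p + 1 ≤ (f r).1 := by
  have h1 := auxPos_spec hf r
  have h2 := (((aux_mem_QIdx f).1 hf).1 r).1
  by_contra hc
  have : (f r).1 = p := by omega
  have := h1.1 (Or.inl this)
  omega

lemma auxPos_spec_C {k p n : ℕ} {g : Fin k → ℕ × Bool} (hg : g ∈ QIdx k p (p+2) n) (i : Fin k) :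
    (g i).1 = p ↔ i.1 < auxPos p g := by
  have h := auxPos_spec hg i
  constructor
  · intro h'; exact h.1 (Or.inl h')
  · intro h'
    rcases h.2 h' with h'' | h''
    · exact h''
    · have := (((aux_mem_QIdx g).1 hg).2.2.1) i (by rw [h''])
      rw [h''] at this
      omega

lemma auxPos_auxIns {k p n : ℕ} {g : Fin k → ℕ × Bool} (hg : g ∈ QIdx k p (p+2) n) (b : Bool) :
    auxPos p (auxIns p g b) = auxPos p g + 1 := by
  apply aux_card_eq_of_iff _ (by have := auxPos_le (p := p) g; omega)
  intro r
  simp only [Finset.mem_filter, Finset.mem_univ, true_and]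
  rcases eq_or_ne r (auxJ p g) with rfl | hne
  · rw [auxIns, Fin.insertNth_apply_same]
    have : (auxJ p g).1 = auxPos p g := rfl
    cases b <;> simp [auxE, this]
  · obtain ⟨i, rfl⟩ := Fin.exists_succAbove_eq hne
    rw [auxIns, Fin.insertNth_apply_succAbove, auxPos_spec hg i]
    have hval := aux_succAbove_val (auxJ p g) i
    have hJ : (auxJ p g).1 = auxPos p g := rfl
    rw [hval, hJ]
    split_ifs <;> omega

lemma auxDel_auxIns {k p n : ℕ} {g : Fin k → ℕ × Bool} (hg : g ∈ QIdx k p (p+2) n) (b : Bool) :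
    auxDel p (auxIns p g b) = g := by
  have hD : auxD p (auxIns p g b) = auxJ p g :=
    Fin.ext (by simp [auxD, auxJ, auxPos_auxIns hg b])
  rw [auxDel, hD, auxIns, Fin.removeNth_insertNth]

lemma auxB_auxIns {k p n : ℕ} {g : Fin k → ℕ × Bool} (hg : g ∈ QIdx k p (p+2) n) (b : Bool) :
    auxB p (auxIns p g b) = b := by
  have hD : auxD p (auxIns p g b) = auxJ p g :=
    Fin.ext (by simp [auxD, auxJ, auxPos_auxIns hg b])
  rw [auxB, hD, auxIns, Fin.insertNth_apply_same]
  cases b <;> rfl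

lemma auxPos_pos {k p n : ℕ} {f : Fin (k+1) → ℕ × Bool}
    (hf : f ∈ QIdx (k+1) p (p+1) n) (hnf : f ∉ QIdx (k+1) (p+1) (p+2) n) :
    1 ≤ auxPos p f := by
  by_contra h
  push_neg at h
  apply hnf
  rw [aux_mem_QIdx] at hf ⊢
  obtain ⟨hb, hmono, hpr, h3⟩ := hf
  have hnp : ∀ r, ¬((f r).1 = p ∨ f r = (p+1, true)) := by
    intro r hr
    have := (auxPos_spec (by rw [aux_mem_QIdx]; exact ⟨hb, hmono, hpr, h3⟩) r).1 hr
    omega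
  refine ⟨fun r => ?_, hmono, fun r hr => ?_, h3⟩
  · have h1 := (hb r).1
    have h2 := (hb r).2
    have := hnp r
    push_neg at this
    exact ⟨by omega, h2⟩
  · have h1 := hpr r hr
    have := hnp r
    push_neg at this
    have h2 := this.2
    rcases Nat.eq_or_lt_of_le h1 with h' | h'
    · exfalso
      apply h2
      have : f r = ((f r).1, (f r).2) := rfl
      rw [this, ← h', hr]
    · omega

lemma aux_last {k p n : ℕ} {f : Fin (k+1) → ℕ × Bool}
    (hf : f ∈ QIdx (k+1) p (p+1) n) (hnf : f ∉ QIdx (k+1) (p+1) (p+2) n) :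
    f (auxD p f) = auxE p (auxB p f) := by
  have h1 := auxPos_pos hf hnf
  have hd : (auxD p f).1 = auxPos p f - 1 := rfl
  have hlt : (auxD p f).1 < auxPos p f := by omega
  have hp := (auxPos_spec hf (auxD p f)).2 hlt
  rw [auxB]
  cases hb2 : (f (auxD p f)).2 with
  | false =>
    rcases hp with h | h
    · have : f (auxD p f) = ((f (auxD p f)).1, (f (auxD p f)).2) := rfl
      rw [this, h, hb2]; rfl
    · rw [h] at hb2; simp at hb2
  | true =>
    rcases hp with h | h
    · have := ((aux_mem_QIdx f).1 hf).2.2.1 (auxD p f) hb2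
      omega
    · rw [h]; rfl

lemma auxPos_auxDel {k p n : ℕ} {f : Fin (k+1) → ℕ × Bool}
    (hf : f ∈ QIdx (k+1) p (p+1) n) (hnf : f ∉ QIdx (k+1) (p+1) (p+2) n) :
    auxPos p (auxDel p f) = auxPos p f - 1 := by
  have h1 := auxPos_pos hf hnf
  have h2 := auxPos_le (p := p) f
  apply aux_card_eq_of_iff _ (by omega)
  intro i
  simp only [Finset.mem_filter, Finset.mem_univ, true_and]
  have happ : auxDel p f i = f ((auxD p f).succAbove i) := rfl
  rw [happ, auxPos_spec hf ((auxD p f).succAbove i)]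
  have hval := aux_succAbove_val (auxD p f) i
  have hD : (auxD p f).1 = auxPos p f - 1 := rfl
  rw [hval, hD]
  split_ifs <;> omega

lemma auxIns_auxDel {k p n : ℕ} {f : Fin (k+1) → ℕ × Bool}
    (hf : f ∈ QIdx (k+1) p (p+1) n) (hnf : f ∉ QIdx (k+1) (p+1) (p+2) n) :
    auxIns p (auxDel p f) (auxB p f) = f := by
  have hJ : auxJ p (auxDel p f) = auxD p f :=
    Fin.ext (by simp [auxJ, auxD, auxPos_auxDel hf hnf])
  rw [auxIns, hJ, ← aux_last hf hnf, auxDel, Fin.insertNth_self_removeNth]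

lemma auxDel_mem {k p n : ℕ} {f : Fin (k+1) → ℕ × Bool}
    (hf : f ∈ QIdx (k+1) p (p+1) n) (hnf : f ∉ QIdx (k+1) (p+1) (p+2) n) :
    auxDel p f ∈ QIdx k p (p+2) n := by
  have hlast := aux_last hf hnf
  have h1 := auxPos_pos hf hnf
  have hD : (auxD p f).1 = auxPos p f - 1 := rfl
  obtain ⟨hb, hmono, hpr, h3⟩ := (aux_mem_QIdx f).1 hf
  have hvali : ∀ i : Fin k, ((auxD p f).succAbove i).1
      = if i.1 < auxPos p f - 1 then i.1 else i.1 + 1 := by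
    intro i; rw [aux_succAbove_val, hD]
  have hle : ∀ i i' : Fin k, i ≤ i' → (auxD p f).succAbove i ≤ (auxD p f).succAbove i' := by
    intro i i' h
    rw [Fin.le_def, hvali, hvali]
    have := Fin.le_def.1 h
    split_ifs <;> omega
  have hlerev : ∀ i i' : Fin k,
      (auxD p f).succAbove i ≤ (auxD p f).succAbove i' → i ≤ i' := by
    intro i i' h
    rw [Fin.le_def, hvali, hvali] at h
    rw [Fin.le_def]
    split_ifs at h <;> omega
  have happ : ∀ i : Fin k, auxDel p f i = f ((auxD p f).succAbove i) := fun _ => rfl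
  rw [aux_mem_QIdx]
  refine ⟨fun i => by rw [happ]; exact hb _,
    fun i i' h => by rw [happ, happ]; exact hmono _ _ (hle _ _ h), ?_,
    fun i i' h2 hv => hlerev _ _ (h3 _ _ (by rw [happ] at h2; exact h2)
      (by rw [happ, happ] at hv; exact hv))⟩
  intro i hbr
  rw [happ] at hbr ⊢
  set r := (auxD p f).succAbove i with hr
  have hge := hpr r hbr
  by_contra hc
  push_neg at hc
  have hval : (f r).1 = p + 1 := by omega
  have hfr : f r = (p+1, true) := by
    rw [show f r = ((f r).1, (f r).2) from rfl, hval, hbr]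
  have hin : r.1 < auxPos p f := (auxPos_spec hf r).1 (Or.inr hfr)
  have hrv : r.1 = if i.1 < auxPos p f - 1 then i.1 else i.1 + 1 := hvali i
  have hrlt : r.1 < auxPos p f - 1 := by
    split_ifs at hrv <;> omega
  cases hB : auxB p f with
  | true =>
    rw [hB] at hlast
    have : auxD p f ≤ r := h3 (auxD p f) r (by rw [hlast]; rfl)
      (by rw [hlast, hval]; rfl)
    have := Fin.le_def.1 this
    omega
  | false =>
    rw [hB] at hlast
    have hrd : r ≤ auxD p f := by rw [Fin.le_def]; omega
    have := hmono r (auxD p f) hrd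
    rw [hlast] at this
    simp [auxE] at this
    omega

lemma auxIns_mem {k p n : ℕ} {g : Fin k → ℕ × Bool} (hpn : p + 1 ≤ n)
    (hg : g ∈ QIdx k p (p+2) n) (b : Bool) :
    auxIns p g b ∈ QIdx (k+1) p (p+1) n := by
  obtain ⟨hb, hmono, hpr, h3⟩ := (aux_mem_QIdx g).1 hg
  have hlow : ∀ i : Fin k, (g i).1 = p ↔ i.1 < auxPos p g := fun i => auxPos_spec_C hg i
  have hgeJ : ∀ i : Fin k, auxPos p g ≤ i.1 → p + 1 ≤ (g i).1 := fun i h => auxPos_ge hg i h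
  have hsame : auxIns p g b (auxJ p g) = auxE p b := Fin.insertNth_apply_same _ _ _
  have happ : ∀ i : Fin k, auxIns p g b ((auxJ p g).succAbove i) = g i :=
    fun i => Fin.insertNth_apply_succAbove _ _ _ _
  have hJv : (auxJ p g).1 = auxPos p g := rfl
  have hvali : ∀ i : Fin k, ((auxJ p g).succAbove i).1
      = if i.1 < auxPos p g then i.1 else i.1 + 1 := by
    intro i; rw [aux_succAbove_val, hJv]
  have he1 : p ≤ (auxE p b).1 ∧ (auxE p b).1 ≤ p + 1 := by cases b <;> simp [auxE]
  have he2 : (auxE p b).2 = true → (auxE p b).1 = p + 1 := by cases b <;> simp [auxE]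
  rw [aux_mem_QIdx]
  refine ⟨?_, ?_, ?_, ?_⟩
  · intro r
    rcases eq_or_ne r (auxJ p g) with rfl | hne
    · rw [hsame]; omega
    · obtain ⟨i, rfl⟩ := Fin.exists_succAbove_eq hne
      rw [happ]; exact hb i
  · intro r s hrs
    rcases eq_or_ne r (auxJ p g) with rfl | hner
    · rcases eq_or_ne s (auxJ p g) with rfl | hnes
      · exact le_refl _
      · obtain ⟨i, rfl⟩ := Fin.exists_succAbove_eq hnes
        rw [hsame, happ]
        have hv := hvali i
        have hl := Fin.le_def.1 hrs
        rw [hJv] at hl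
        have : auxPos p g ≤ i.1 := by split_ifs at hv <;> omega
        have := hgeJ i this
        omega
    · obtain ⟨i, rfl⟩ := Fin.exists_succAbove_eq hner
      rcases eq_or_ne s (auxJ p g) with rfl | hnes
      · rw [hsame, happ]
        have hv := hvali i
        have hl := Fin.le_def.1 hrs
        rw [hJv] at hl
        have hi : i.1 < auxPos p g := by split_ifs at hv <;> omega
        have := (hlow i).2 hi
        omega
      · obtain ⟨i', rfl⟩ := Fin.exists_succAbove_eq hnes
        rw [happ, happ]
        apply hmono
        have hl := Fin.le_def.1 hrs
        rw [hvali, hvali] at hl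
        rw [Fin.le_def]
        split_ifs at hl <;> omega
  · intro r hr2
    rcases eq_or_ne r (auxJ p g) with rfl | hne
    · rw [hsame] at hr2 ⊢
      rw [he2 hr2]
    · obtain ⟨i, rfl⟩ := Fin.exists_succAbove_eq hne
      rw [happ] at hr2 ⊢
      have := hpr i hr2
      omega
  · intro r s hr2 hv
    rcases eq_or_ne r (auxJ p g) with rfl | hner
    · rcases eq_or_ne s (auxJ p g) with rfl | hnes
      · exact le_refl _
      · obtain ⟨i, rfl⟩ := Fin.exists_succAbove_eq hnes
        rw [hsame] at hr2
        rw [hsame, happ] at hv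
        have hgi : (g i).1 = p + 1 := by rw [hv, he2 hr2]
        have hnp : ¬ (g i).1 = p := by omega
        have hi : auxPos p g ≤ i.1 := by
          by_contra h
          exact hnp ((hlow i).2 (by omega))
        rw [Fin.le_def, hJv, hvali]
        split_ifs <;> omega
    · obtain ⟨i, rfl⟩ := Fin.exists_succAbove_eq hner
      rw [happ] at hr2
      have hp2 := hpr i hr2
      rcases eq_or_ne s (auxJ p g) with rfl | hnes
      · rw [hsame, happ] at hv
        omega
      · obtain ⟨i', rfl⟩ := Fin.exists_succAbove_eq hnes
        rw [happ, happ] at hv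
        have := h3 i i' hr2 hv
        have := Fin.le_def.1 this
        rw [Fin.le_def, hvali, hvali]
        split_ifs <;> omega

lemma auxIns_not_mem {k p n : ℕ} {g : Fin k → ℕ × Bool} (b : Bool) :
    auxIns p g b ∉ QIdx (k+1) (p+1) (p+2) n := by
  intro hmem
  rw [aux_mem_QIdx] at hmem
  have hsame : auxIns p g b (auxJ p g) = auxE p b := Fin.insertNth_apply_same _ _ _
  cases b with
  | true =>
    have := hmem.2.2.1 (auxJ p g) (by rw [hsame]; rfl)
    rw [hsame] at this
    simp [auxE] at this
  | false =>
    have := (hmem.1 (auxJ p g)).1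
    rw [hsame] at this
    simp [auxE] at this

lemma auxTerm {k p n : ℕ} {g : Fin k → ℕ × Bool} (hg : g ∈ QIdx k p (p+2) n)
    (b : Bool) (x y a : ℕ → R) :
    qTerm (fun _ => 0) x y a (auxIns p g b) =
      (if b then y (p+1) - a (auxPos p g + 1) else x p + a (auxPos p g + 1)) *
      qTerm (fun i => if p + 1 ≤ i then 1 else 0) x y a g := by
  have hsame : auxIns p g b (auxJ p g) = auxE p b := Fin.insertNth_apply_same _ _ _
  have happ : ∀ i : Fin k, auxIns p g b ((auxJ p g).succAbove i) = g i :=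
    fun i => Fin.insertNth_apply_succAbove _ _ _ _
  have hJv : (auxJ p g).1 = auxPos p g := rfl
  rw [qTerm, Fin.prod_univ_succAbove _ (auxJ p g)]
  congr 1
  · rw [hsame]
    cases b <;> simp [auxE, hJv]
  · rw [qTerm]
    apply Finset.prod_congr rfl
    intro i _
    rw [happ i]
    have hvali : ((auxJ p g).succAbove i).1 = if i.1 < auxPos p g then i.1 else i.1 + 1 := by
      rw [aux_succAbove_val, hJv]
    have hidx : ((auxJ p g).succAbove i).1 + 1 + 0
        = i.1 + 1 + (if p + 1 ≤ (g i).1 then 1 else 0) := by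
      rcases Nat.lt_or_ge i.1 (auxPos p g) with h | h
      · have hgi : (g i).1 = p := (auxPos_spec_C hg i).2 h
        rw [hvali, if_pos h, if_neg (by omega)]
      · have hgi := auxPos_ge hg i h
        rw [hvali, if_neg (by omega), if_pos hgi]
    simp only [hidx, Nat.add_zero]

/-- Lemma 3(a): for `m ≥ 1` and `1 ≤ p < n`,
`q_m(x_p, y_{p+1}, x_{p+1}, …, y_n, x_n | a) − q_m(x_{p+1}, y_{p+2}, …, y_n, x_n | a)
  = (x_p + y_{p+1}) · q_{m−1}(x_p, sh x_{p+1}, y_{p+2}, x_{p+2}, …, y_n, x_n | a)`,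
where `sh` raises by one the `a`-index in every factor attached to a variable to its
right (here: every variable with index `≥ p+1`). -/
theorem qfun_lemma_a (n m p : ℕ) (hm : 1 ≤ m) (hp : 1 ≤ p) (hpn : p < n)
    (x y a : ℕ → R) :
    qfun m p (p + 1) n (fun _ => 0) x y a - qfun m (p + 1) (p + 2) n (fun _ => 0) x y a
      = (x p + y (p + 1)) *
        qfun (m - 1) p (p + 2) n (fun i => if p + 1 ≤ i then 1 else 0) x y a := by
  obtain ⟨k, rfl⟩ : ∃ k, m = k + 1 := ⟨m - 1, by omega⟩
  simp only [Nat.add_sub_cancel]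
  have hBA : QIdx (k+1) (p+1) (p+2) n ⊆ QIdx (k+1) p (p+1) n := by
    intro f hf
    rw [aux_mem_QIdx] at hf ⊢
    obtain ⟨hb, h1, h2, h3⟩ := hf
    exact ⟨fun r => ⟨by have := (hb r).1; omega, (hb r).2⟩, h1,
      fun r hr => by have := h2 r hr; omega, h3⟩
  rw [qfun, qfun, ← Finset.sum_sdiff hBA, add_sub_cancel_right, qfun, Finset.mul_sum]
  have hterm : ∀ g ∈ QIdx k p (p+2) n,
      (x p + y (p + 1)) * qTerm (fun i => if p + 1 ≤ i then 1 else 0) x y a g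
        = ∑ b : Bool, qTerm (fun _ => 0) x y a (auxIns p g b) := by
    intro g hg
    rw [Fintype.sum_bool, auxTerm hg true x y a, auxTerm hg false x y a]
    simp only [Bool.false_eq_true, if_true, if_false]
    ring
  rw [Finset.sum_congr rfl hterm, ← Finset.sum_product']
  apply Finset.sum_nbij' (fun f => (auxDel p f, auxB p f)) (fun gb => auxIns p gb.1 gb.2)
  · intro f hf
    rw [Finset.mem_sdiff] at hf
    rw [Finset.mem_product]
    exact ⟨auxDel_mem hf.1 hf.2, Finset.mem_univ _⟩
  · intro gb hgb
    rw [Finset.mem_product] at hgb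
    rw [Finset.mem_sdiff]
    exact ⟨auxIns_mem (by omega) hgb.1 gb.2, auxIns_not_mem gb.2⟩
  · intro f hf
    rw [Finset.mem_sdiff] at hf
    exact auxIns_auxDel hf.1 hf.2
  · intro gb hgb
    rw [Finset.mem_product] at hgb
    exact Prod.ext (auxDel_auxIns hgb.1 gb.2) (auxB_auxIns hgb.1 gb.2)
  · intro f hf
    rw [Finset.mem_sdiff] at hf
    rw [auxIns_auxDel hf.1 hf.2]
end
end

section
/- Let λ = μ + δ with δ = (n, n−1, …, 1) and μ a partition of length at most n, and let m = λ_1. For each n×m alternating sign matrix A in the class A^λ, let C(A) be its compass point matrix and let #XY denote the number of entries equal to XY in C(A). Then #SW = #NE + |μ|. -/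
open Finset

noncomputable section
open Classical

variable {R : Type*} [CommRing R]

/-- Membership of the class `A^λ` of `n × m` alternating sign matrices (entries indexed
by `1 ≤ i ≤ n`, `1 ≤ j ≤ m`, zero outside the grid): entries lie in `{−1,0,1}`, nonzero
entries alternate in sign along rows and columns, the rightmost nonzero entry of each
row and the topmost nonzero entry of each column is `1`, each row sums to `1`, and
column `j` sums to `1` iff `j` is a part of `λ` (else `0`). -/
def IsAsm (lam : ℕ → ℕ) (n m : ℕ) (A : ℕ → ℕ → ℤ) : Prop :=
  (∀ i j, ¬(1 ≤ i ∧ i ≤ n ∧ 1 ≤ j ∧ j ≤ m) → A i j = 0) ∧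
  (∀ i j, A i j = 1 ∨ A i j = 0 ∨ A i j = -1) ∧
  (∀ i j j', j < j' → A i j ≠ 0 → A i j' ≠ 0 →
    (∀ j'', j < j'' → j'' < j' → A i j'' = 0) → A i j' = -A i j) ∧
  (∀ i i' j, i < i' → A i j ≠ 0 → A i' j ≠ 0 →
    (∀ i'', i < i'' → i'' < i' → A i'' j = 0) → A i' j = -A i j) ∧
  (∀ i j, A i j ≠ 0 → (∀ j', j < j' → A i j' = 0) → A i j = 1) ∧
  (∀ i j, A i j ≠ 0 → (∀ i', i' < i → A i' j = 0) → A i j = 1) ∧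
  (∀ i, 1 ≤ i → i ≤ n → ∑ j ∈ Finset.Icc 1 m, A i j = 1) ∧
  (∀ j, 1 ≤ j → j ≤ m → ∑ i ∈ Finset.Icc 1 n, A i j =
    (if ∃ k, 1 ≤ k ∧ k ≤ n ∧ lam k = j then 1 else 0))

/-- `λ = μ + δ` with `δ = (n, n−1, …, 1)`. -/
def lamOf (μ : ℕ → ℕ) (n : ℕ) : ℕ → ℕ :=
  fun i => if 1 ≤ i ∧ i ≤ n then μ i + (n + 1 - i) else 0

/-- The six compass-point symbols. -/
inductive Cpm | WE | NS | NE | SE | NW | SW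
  deriving DecidableEq

/-- The value of the nearest nonzero entry strictly above `(i,j)` in column `j`
(a missing nonzero neighbour to the north counts as `−1`). -/
def northVal (A : ℕ → ℕ → ℤ) (i j : ℕ) : ℤ :=
  if h : ((Finset.Ico 1 i).filter fun i' => A i' j ≠ 0).Nonempty then
    A (((Finset.Ico 1 i).filter fun i' => A i' j ≠ 0).max' h) j
  else -1

/-- The value of the nearest nonzero entry strictly to the left of `(i,j)` in row `i`
(a missing nonzero neighbour to the west counts as `−1`). -/
def westVal (A : ℕ → ℕ → ℤ) (i j : ℕ) : ℤ :=
  if h : ((Finset.Ico 1 j).filter fun j' => A i j' ≠ 0).Nonempty then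
    A i (((Finset.Ico 1 j).filter fun j' => A i j' ≠ 0).max' h)
  else -1

/-- The compass point matrix of an ASM: an entry `1` becomes `WE`, an entry `−1`
becomes `NS`, and an entry `0` becomes `NE`, `SE`, `NW` or `SW` according to the
nearest nonzero entries to its north and west. -/
def cpmOf (A : ℕ → ℕ → ℤ) (i j : ℕ) : Cpm :=
  if A i j = 1 then .WE
  else if A i j = -1 then .NS
  else if northVal A i j = 1 ∧ westVal A i j = 1 then .NE
  else if northVal A i j = -1 ∧ westVal A i j = 1 then .SE
  else if northVal A i j = 1 ∧ westVal A i j = -1 then .NW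
  else .SW

variable {lam : ℕ → ℕ} {n m : ℕ} {A : ℕ → ℕ → ℤ}

/-- suffix row sum invariant, by downward induction (fuel `k`). -/
lemma trowInv (hA : IsAsm lam n m A) (i : ℕ) :
    ∀ k j, m + 1 ≤ j + k → 1 ≤ j →
      (((∑ j' ∈ Icc j m, A i j') = 0 ∨ (∑ j' ∈ Icc j m, A i j') = 1) ∧
       ∀ j', j ≤ j' → A i j' ≠ 0 → (∀ j'', j ≤ j'' → j'' < j' → A i j'' = 0) →
         (A i j' = 1 ↔ (∑ j'' ∈ Icc j m, A i j'') = 1)) := by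
  obtain ⟨hz, hval, hrowalt, -, hright, -, -, -⟩ := hA
  intro k
  induction k with
  | zero =>
    intro j hj _
    have hempty : Icc j m = ∅ := Icc_eq_empty (by omega)
    rw [hempty]
    refine ⟨Or.inl rfl, ?_⟩
    intro j' hjj' hne _
    exact absurd (hz i j' (by omega)) hne
  | succ k IH =>
    intro j hj hj1
    by_cases hjm : m < j
    · exact IH j (by omega) hj1
    push_neg at hjm
    have IH' := IH (j + 1) (by omega) (by omega)
    have hsplit : (∑ j' ∈ Icc j m, A i j') = A i j + ∑ j' ∈ Icc (j+1) m, A i j' := by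
      rw [Finset.Icc_eq_cons_Ioc hjm, Finset.sum_cons, Finset.Icc_add_one_left_eq_Ioc]
    -- minimal nonzero in [j+1, m] machinery
    set s : Finset ℕ := (Icc (j+1) m).filter (fun j' => A i j' ≠ 0) with hs_def
    have hnear : ∀ h : s.Nonempty, (j < s.min' h ∧ A i (s.min' h) ≠ 0 ∧
        (∀ j'', j < j'' → j'' < s.min' h → A i j'' = 0) ∧
        (A i (s.min' h) = 1 ↔ (∑ j'' ∈ Icc (j+1) m, A i j'') = 1)) := by
      intro h
      obtain ⟨hmemIcc, hmemne⟩ := Finset.mem_filter.mp (s.min'_mem h)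
      rw [Finset.mem_Icc] at hmemIcc
      have hzero : ∀ j'', j < j'' → j'' < s.min' h → A i j'' = 0 := by
        intro j'' h1 h2
        by_contra hne
        have : j'' ∈ s := by
          rw [hs_def, mem_filter, mem_Icc]
          exact ⟨⟨by omega, by omega⟩, hne⟩
        have := s.min'_le _ this
        omega
      refine ⟨by omega, hmemne, hzero, ?_⟩
      exact IH'.2 (s.min' h) (by omega) hmemne (fun j'' h1 h2 => hzero j'' (by omega) h2)
    have hallzero : ¬ s.Nonempty → ∀ j', j < j' → A i j' = 0 := by
      intro h j' hjj'
      by_cases hj'm : j' ≤ m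
      · by_contra hne
        exact h ⟨j', by rw [hs_def, mem_filter, mem_Icc]; exact ⟨⟨by omega, hj'm⟩, hne⟩⟩
      · exact hz i j' (by omega)
    rcases hval i j with h1 | h0 | hm1
    · -- A i j = 1
      have hT' : (∑ j' ∈ Icc (j+1) m, A i j') = 0 := by
        rcases IH'.1 with h | h
        · exact h
        · exfalso
          have hsne : s.Nonempty := by
            by_contra hc
            have : (∑ j' ∈ Icc (j+1) m, A i j') = 0 :=
              Finset.sum_eq_zero (fun x hx => by
                rw [mem_Icc] at hx
                by_contra hne
                exact hc ⟨x, by rw [hs_def, mem_filter, mem_Icc]; exact ⟨hx, hne⟩⟩)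
            omega
          obtain ⟨hlt, hne0, hzero, hiff⟩ := hnear hsne
          have := hrowalt i j (s.min' hsne) hlt (by rw [h1]; norm_num) hne0 hzero
          rw [hiff.2 h, h1] at this
          norm_num at this
      constructor
      · right; rw [hsplit, h1, hT']; ring
      · intro j' hjj' hne hfirst
        have hj'eq : j' = j := by
          by_contra hc
          have := hfirst j (le_refl j) (by omega)
          rw [this] at h1; norm_num at h1
        subst hj'eq
        rw [hsplit, h1, hT']
        norm_num
    · -- A i j = 0
      have hTeq : (∑ j' ∈ Icc j m, A i j') = ∑ j' ∈ Icc (j+1) m, A i j' := by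
        rw [hsplit, h0]; ring
      rw [hTeq]
      refine ⟨IH'.1, ?_⟩
      intro j' hjj' hne hfirst
      have hj'ne : j' ≠ j := fun e => hne (e ▸ h0)
      exact IH'.2 j' (by omega) hne (fun j'' h1 h2 => hfirst j'' (by omega) h2)
    · -- A i j = -1
      have hT' : (∑ j' ∈ Icc (j+1) m, A i j') = 1 := by
        rcases IH'.1 with h | h
        · exfalso
          by_cases hsne : s.Nonempty
          · obtain ⟨hlt, hne0, hzero, hiff⟩ := hnear hsne
            have halt := hrowalt i j (s.min' hsne) hlt (by rw [hm1]; norm_num) hne0 hzero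
            rw [hm1] at halt
            norm_num at halt
            rw [hiff.1 halt] at h
            norm_num at h
          · have := hright i j (by rw [hm1]; norm_num) (hallzero hsne)
            rw [hm1] at this; norm_num at this
        · exact h
      constructor
      · left; rw [hsplit, hm1, hT']; ring
      · intro j' hjj' hne hfirst
        have hj'eq : j' = j := by
          by_contra hc
          have := hfirst j (le_refl j) (by omega)
          rw [this] at hm1; norm_num at hm1
        subst hj'eq
        rw [hsplit, hm1, hT']
        norm_num

/-- the leftmost nonzero entry of a row (within the grid) is `1`. -/
lemma rowFirst (hA : IsAsm lam n m A) {i : ℕ} (hi1 : 1 ≤ i) (hin : i ≤ n) {j : ℕ}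
    (hne : A i j ≠ 0) (hleft : ∀ j', j' < j → A i j' = 0) : A i j = 1 := by
  have hz := hA.1
  have hrowsum := hA.2.2.2.2.2.2.1
  have hj1 : 1 ≤ j := by
    by_contra hc
    exact hne (hz i j (by omega))
  have h := (trowInv hA i (m + 1) 1 (by omega) le_rfl).2 j hj1 hne
    (fun j'' h1 h2 => hleft j'' h2)
  rw [h]
  exact hrowsum i hi1 hin

/-- row prefix-sum / westVal invariant. -/
lemma rowInv (hA : IsAsm lam n m A) {i : ℕ} (hi1 : 1 ≤ i) (hin : i ≤ n) :
    ∀ j, 1 ≤ j →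
      ((∑ j' ∈ Ico 1 j, A i j') = 0 ∧ westVal A i j = -1) ∨
      ((∑ j' ∈ Ico 1 j, A i j') = 1 ∧ westVal A i j = 1) := by
  have hz := hA.1
  have hval := hA.2.1
  have hrowalt := hA.2.2.1
  intro j hj
  induction j, hj using Nat.le_induction with
  | base =>
    left
    constructor
    · simp
    · rw [westVal, dif_neg]
      simp
  | succ j hj IH =>
    have hsum : (∑ j' ∈ Ico 1 (j+1), A i j') = (∑ j' ∈ Ico 1 j, A i j') + A i j :=
      Finset.sum_Ico_succ_top hj _
    have hfe : A i j = 0 →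
        ((Ico 1 (j+1)).filter fun j' => A i j' ≠ 0) = ((Ico 1 j).filter fun j' => A i j' ≠ 0) := by
      intro h0
      ext j'
      simp only [mem_filter, mem_Ico]
      constructor
      · rintro ⟨⟨h1, h2⟩, h3⟩
        refine ⟨⟨h1, ?_⟩, h3⟩
        rcases Nat.lt_succ_iff_lt_or_eq.mp h2 with h | h
        · exact h
        · exact absurd (h ▸ h0) h3
      · rintro ⟨⟨h1, h2⟩, h3⟩
        exact ⟨⟨h1, by omega⟩, h3⟩
    have hwne : A i j ≠ 0 → westVal A i (j+1) = A i j := by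
      intro hne
      have hjmem : j ∈ (Ico 1 (j+1)).filter fun j' => A i j' ≠ 0 := by
        simp only [mem_filter, mem_Ico]
        exact ⟨⟨hj, by omega⟩, hne⟩
      have hne' : ((Ico 1 (j+1)).filter fun j' => A i j' ≠ 0).Nonempty := ⟨j, hjmem⟩
      rw [westVal, dif_pos hne']
      congr 1
      apply le_antisymm
      · apply Finset.max'_le
        intro y hy
        simp only [mem_filter, mem_Ico] at hy
        omega
      · exact Finset.le_max' _ j hjmem
    -- nearest nonzero to the left of j, when westVal A i j is known
    have hmax : ∀ h : ((Ico 1 j).filter fun j' => A i j' ≠ 0).Nonempty,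
        A i j = -(A i (((Ico 1 j).filter fun j' => A i j' ≠ 0).max' h)) ∨ A i j = 0 := by
      intro h
      rcases hval i j with h1 | h0 | hm1
      · left
        set j0 := ((Ico 1 j).filter fun j' => A i j' ≠ 0).max' h with hj0
        obtain ⟨hj0mem, hj0ne⟩ := Finset.mem_filter.mp (Finset.max'_mem _ h)
        rw [Finset.mem_Ico] at hj0mem
        have hzero : ∀ j'', j0 < j'' → j'' < j → A i j'' = 0 := by
          intro j'' ha hb
          by_contra hne
          have : j'' ∈ (Ico 1 j).filter fun j' => A i j' ≠ 0 := by
            simp only [mem_filter, mem_Ico]; exact ⟨⟨by omega, hb⟩, hne⟩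
          have := Finset.le_max' _ _ this
          omega
        exact hrowalt i j0 j hj0mem.2 hj0ne (by rw [h1]; norm_num) hzero
      · right; exact h0
      · left
        set j0 := ((Ico 1 j).filter fun j' => A i j' ≠ 0).max' h with hj0
        obtain ⟨hj0mem, hj0ne⟩ := Finset.mem_filter.mp (Finset.max'_mem _ h)
        rw [Finset.mem_Ico] at hj0mem
        have hzero : ∀ j'', j0 < j'' → j'' < j → A i j'' = 0 := by
          intro j'' ha hb
          by_contra hne
          have : j'' ∈ (Ico 1 j).filter fun j' => A i j' ≠ 0 := by
            simp only [mem_filter, mem_Ico]; exact ⟨⟨by omega, hb⟩, hne⟩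
          have := Finset.le_max' _ _ this
          omega
        exact hrowalt i j0 j hj0mem.2 hj0ne (by rw [hm1]; norm_num) hzero
    rcases hval i j with h1 | h0 | hm1
    · -- A i j = 1 : previous prefix sum must be 0
      right
      have hS0 : (∑ j' ∈ Ico 1 j, A i j') = 0 := by
        rcases IH with ⟨hS, _⟩ | ⟨hS, hw⟩
        · exact hS
        · exfalso
          have hne' : ((Ico 1 j).filter fun j' => A i j' ≠ 0).Nonempty := by
            by_contra hc
            rw [westVal, dif_neg hc] at hw
            norm_num at hw
          rcases hmax hne' with hc | hc
          · rw [westVal, dif_pos hne'] at hw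
            rw [hw] at hc
            rw [h1] at hc; norm_num at hc
          · rw [hc] at h1; norm_num at h1
      refine ⟨by rw [hsum, hS0, h1]; ring, by rw [hwne (by rw [h1]; norm_num), h1]⟩
    · -- A i j = 0
      rw [hsum, h0, add_zero, westVal, hfe h0, ← westVal]
      exact IH
    · -- A i j = -1 : previous prefix sum must be 1
      left
      have hS1 : (∑ j' ∈ Ico 1 j, A i j') = 1 := by
        rcases IH with ⟨hS, hw⟩ | ⟨hS, _⟩
        · exfalso
          by_cases hne' : ((Ico 1 j).filter fun j' => A i j' ≠ 0).Nonempty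
          · rcases hmax hne' with hc | hc
            · rw [westVal, dif_pos hne'] at hw
              rw [hw] at hc
              rw [hm1] at hc; norm_num at hc
            · rw [hc] at hm1; norm_num at hm1
          · have hleft : ∀ j', j' < j → A i j' = 0 := by
              intro j' hj'
              by_cases h1' : 1 ≤ j'
              · by_contra hc
                exact hne' ⟨j', by simp only [mem_filter, mem_Ico]; exact ⟨⟨h1', hj'⟩, hc⟩⟩
              · exact hz i j' (by omega)
            have := rowFirst hA hi1 hin (by rw [hm1]; norm_num) hleft
            rw [hm1] at this; norm_num at this
        · exact hS
      refine ⟨by rw [hsum, hS1, hm1]; ring, by rw [hwne (by rw [hm1]; norm_num), hm1]⟩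

/-- column prefix-sum / northVal invariant. -/
lemma colInv (hA : IsAsm lam n m A) (j : ℕ) :
    ∀ i, 1 ≤ i →
      ((∑ i' ∈ Ico 1 i, A i' j) = 0 ∧ northVal A i j = -1) ∨
      ((∑ i' ∈ Ico 1 i, A i' j) = 1 ∧ northVal A i j = 1) := by
  have hz := hA.1
  have hval := hA.2.1
  have hcolalt := hA.2.2.2.1
  have htop := hA.2.2.2.2.2.1
  intro i hi
  induction i, hi using Nat.le_induction with
  | base =>
    left
    constructor
    · simp
    · rw [northVal, dif_neg]
      simp
  | succ i hi IH =>
    have hsum : (∑ i' ∈ Ico 1 (i+1), A i' j) = (∑ i' ∈ Ico 1 i, A i' j) + A i j :=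
      Finset.sum_Ico_succ_top hi _
    have hfe : A i j = 0 →
        ((Ico 1 (i+1)).filter fun i' => A i' j ≠ 0) = ((Ico 1 i).filter fun i' => A i' j ≠ 0) := by
      intro h0
      ext i'
      simp only [mem_filter, mem_Ico]
      constructor
      · rintro ⟨⟨h1, h2⟩, h3⟩
        refine ⟨⟨h1, ?_⟩, h3⟩
        rcases Nat.lt_succ_iff_lt_or_eq.mp h2 with h | h
        · exact h
        · exact absurd (h ▸ h0) h3
      · rintro ⟨⟨h1, h2⟩, h3⟩
        exact ⟨⟨h1, by omega⟩, h3⟩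
    have hwne : A i j ≠ 0 → northVal A (i+1) j = A i j := by
      intro hne
      have himem : i ∈ (Ico 1 (i+1)).filter fun i' => A i' j ≠ 0 := by
        simp only [mem_filter, mem_Ico]
        exact ⟨⟨hi, by omega⟩, hne⟩
      have hne' : ((Ico 1 (i+1)).filter fun i' => A i' j ≠ 0).Nonempty := ⟨i, himem⟩
      rw [northVal, dif_pos hne']
      congr 1
      apply le_antisymm
      · apply Finset.max'_le
        intro y hy
        simp only [mem_filter, mem_Ico] at hy
        omega
      · exact Finset.le_max' _ i himem
    have hmax : ∀ h : ((Ico 1 i).filter fun i' => A i' j ≠ 0).Nonempty,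
        A i j = -(A (((Ico 1 i).filter fun i' => A i' j ≠ 0).max' h) j) ∨ A i j = 0 := by
      intro h
      obtain ⟨hi0mem, hi0ne⟩ := Finset.mem_filter.mp (Finset.max'_mem _ h)
      rw [Finset.mem_Ico] at hi0mem
      have hzero : ∀ i'', ((Ico 1 i).filter fun i' => A i' j ≠ 0).max' h < i'' → i'' < i →
          A i'' j = 0 := by
        intro i'' ha hb
        by_contra hne
        have : i'' ∈ (Ico 1 i).filter fun i' => A i' j ≠ 0 := by
          simp only [mem_filter, mem_Ico]; exact ⟨⟨by omega, hb⟩, hne⟩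
        have := Finset.le_max' _ _ this
        omega
      rcases hval i j with h1 | h0 | hm1
      · exact Or.inl (hcolalt _ i j hi0mem.2 hi0ne (by rw [h1]; norm_num) hzero)
      · exact Or.inr h0
      · exact Or.inl (hcolalt _ i j hi0mem.2 hi0ne (by rw [hm1]; norm_num) hzero)
    rcases hval i j with h1 | h0 | hm1
    · right
      have hS0 : (∑ i' ∈ Ico 1 i, A i' j) = 0 := by
        rcases IH with ⟨hS, _⟩ | ⟨hS, hw⟩
        · exact hS
        · exfalso
          have hne' : ((Ico 1 i).filter fun i' => A i' j ≠ 0).Nonempty := by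
            by_contra hc
            rw [northVal, dif_neg hc] at hw
            norm_num at hw
          rcases hmax hne' with hc | hc
          · rw [northVal, dif_pos hne'] at hw
            rw [hw] at hc
            rw [h1] at hc; norm_num at hc
          · rw [hc] at h1; norm_num at h1
      refine ⟨by rw [hsum, hS0, h1]; ring, by rw [hwne (by rw [h1]; norm_num), h1]⟩
    · rw [hsum, h0, add_zero, northVal, hfe h0, ← northVal]
      exact IH
    · left
      have hS1 : (∑ i' ∈ Ico 1 i, A i' j) = 1 := by
        rcases IH with ⟨hS, hw⟩ | ⟨hS, _⟩
        · exfalso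
          by_cases hne' : ((Ico 1 i).filter fun i' => A i' j ≠ 0).Nonempty
          · rcases hmax hne' with hc | hc
            · rw [northVal, dif_pos hne'] at hw
              rw [hw] at hc
              rw [hm1] at hc; norm_num at hc
            · rw [hc] at hm1; norm_num at hm1
          · have hup : ∀ i', i' < i → A i' j = 0 := by
              intro i' hi'
              by_cases h1' : 1 ≤ i'
              · by_contra hc
                exact hne' ⟨i', by simp only [mem_filter, mem_Ico]; exact ⟨⟨h1', hi'⟩, hc⟩⟩
              · exact hz i' j (by omega)
            have := htop i j (by rw [hm1]; norm_num) hup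
            rw [hm1] at this; norm_num at this
        · exact hS
      refine ⟨by rw [hsum, hS1, hm1]; ring, by rw [hwne (by rw [hm1]; norm_num), hm1]⟩

/-- cellwise identity: `1 - (row prefix) - (col prefix) - A i j = [SW] - [NE]`. -/
lemma cell_id (hA : IsAsm lam n m A) {i j : ℕ} (hi1 : 1 ≤ i) (hin : i ≤ n) (hj1 : 1 ≤ j) :
    (1 : ℤ) - (∑ j' ∈ Ico 1 j, A i j') - (∑ i' ∈ Ico 1 i, A i' j) - A i j
      = (if cpmOf A i j = Cpm.SW then 1 else 0)
        - (if cpmOf A i j = Cpm.NE then 1 else 0) := by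
  have hval := hA.2.1
  have hrow := rowInv hA hi1 hin j hj1
  have hrow' := rowInv hA hi1 hin (j+1) (by omega)
  have hcol := colInv hA j i hi1
  have hcol' := colInv hA j (i+1) (by omega)
  rw [Finset.sum_Ico_succ_top hj1] at hrow'
  rw [Finset.sum_Ico_succ_top hi1] at hcol'
  rcases hval i j with h1 | h0 | hm1
  · have hSr : (∑ j' ∈ Ico 1 j, A i j') = 0 := by
      rcases hrow with ⟨h, _⟩ | ⟨h, _⟩
      · exact h
      · rcases hrow' with ⟨h', _⟩ | ⟨h', _⟩ <;> rw [h1] at h' <;> omega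
    have hSc : (∑ i' ∈ Ico 1 i, A i' j) = 0 := by
      rcases hcol with ⟨h, _⟩ | ⟨h, _⟩
      · exact h
      · rcases hcol' with ⟨h', _⟩ | ⟨h', _⟩ <;> rw [h1] at h' <;> omega
    have hc : cpmOf A i j = Cpm.WE := by rw [cpmOf, if_pos h1]
    rw [hc, hSr, hSc, h1]
    simp
  · -- A i j = 0
    rcases hrow with ⟨hSr, hw⟩ | ⟨hSr, hw⟩ <;> rcases hcol with ⟨hSc, hn⟩ | ⟨hSc, hn⟩
    · -- Sr = 0, Sc = 0 : SW
      have hc : cpmOf A i j = Cpm.SW := by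
        rw [cpmOf, if_neg (by rw [h0]; norm_num), if_neg (by rw [h0]; norm_num),
          if_neg (by simp [hn, hw]), if_neg (by simp [hn, hw]),
          if_neg (by simp [hn, hw])]
      rw [hc, hSr, hSc, h0]
      simp
    · -- Sr = 0, Sc = 1 : NW
      have hc : cpmOf A i j = Cpm.NW := by
        rw [cpmOf, if_neg (by rw [h0]; norm_num), if_neg (by rw [h0]; norm_num),
          if_neg (by simp [hn, hw]), if_neg (by simp [hn, hw]),
          if_pos ⟨hn, hw⟩]
      rw [hc, hSr, hSc, h0]
      simp
    · -- Sr = 1, Sc = 0 : SE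
      have hc : cpmOf A i j = Cpm.SE := by
        rw [cpmOf, if_neg (by rw [h0]; norm_num), if_neg (by rw [h0]; norm_num),
          if_neg (by simp [hn, hw]), if_pos ⟨hn, hw⟩]
      rw [hc, hSr, hSc, h0]
      simp
    · -- Sr = 1, Sc = 1 : NE
      have hc : cpmOf A i j = Cpm.NE := by
        rw [cpmOf, if_neg (by rw [h0]; norm_num), if_neg (by rw [h0]; norm_num),
          if_pos ⟨hn, hw⟩]
      rw [hc, hSr, hSc, h0]
      simp
  · have hSr : (∑ j' ∈ Ico 1 j, A i j') = 1 := by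
      rcases hrow with ⟨h, _⟩ | ⟨h, _⟩
      · rcases hrow' with ⟨h', _⟩ | ⟨h', _⟩ <;> rw [hm1] at h' <;> omega
      · exact h
    have hSc : (∑ i' ∈ Ico 1 i, A i' j) = 1 := by
      rcases hcol with ⟨h, _⟩ | ⟨h, _⟩
      · rcases hcol' with ⟨h', _⟩ | ⟨h', _⟩ <;> rw [hm1] at h' <;> omega
      · exact h
    have hc : cpmOf A i j = Cpm.NS := by
      rw [cpmOf, if_neg (by rw [hm1]; norm_num), if_pos hm1]
    rw [hc, hSr, hSc, hm1]
    simp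

lemma prefix_sum_swap (M : ℕ) (f : ℕ → ℤ) :
    ∑ j ∈ Icc 1 M, ∑ j' ∈ Ico 1 j, f j' = ∑ j' ∈ Icc 1 M, ((M : ℤ) - (j' : ℤ)) * f j' := by
  have h1 : ∀ j ∈ Icc 1 M, (∑ j' ∈ Ico 1 j, f j') = ∑ j' ∈ Icc 1 M, if j' < j then f j' else 0 := by
    intro j hj
    rw [mem_Icc] at hj
    rw [← Finset.sum_filter]
    apply Finset.sum_congr _ (fun x _ => rfl)
    ext j'
    simp only [mem_filter, mem_Icc, mem_Ico]
    omega
  rw [Finset.sum_congr rfl h1, Finset.sum_comm]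
  apply Finset.sum_congr rfl
  intro j' hj'
  rw [mem_Icc] at hj'
  rw [← Finset.sum_filter]
  have h2 : (Icc 1 M).filter (fun j => j' < j) = Icc (j' + 1) M := by
    ext x
    simp only [mem_filter, mem_Icc]
    omega
  rw [h2, Finset.sum_const, Nat.card_Icc, nsmul_eq_mul]
  have : ((M + 1 - (j' + 1) : ℕ) : ℤ) = (M : ℤ) - (j' : ℤ) := by omega
  rw [this]

/-- for `λ = μ + δ`, `m = λ_1`, and any `A ∈ A^λ`, the compass point
matrix of `A` satisfies `#SW = #NE + |μ|`. -/
theorem card_SW_eq_card_NE_add (n : ℕ) (hn : 1 ≤ n) (μ : ℕ → ℕ)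
    (hanti : ∀ i j, 1 ≤ i → i ≤ j → μ j ≤ μ i) (hlen : ∀ i, n < i → μ i = 0)
    (A : ℕ → ℕ → ℤ) (hA : IsAsm (lamOf μ n) n (μ 1 + n) A) :
    ((Finset.Icc 1 n ×ˢ Finset.Icc 1 (μ 1 + n)).filter
        (fun p => cpmOf A p.1 p.2 = Cpm.SW)).card
      = ((Finset.Icc 1 n ×ˢ Finset.Icc 1 (μ 1 + n)).filter
          (fun p => cpmOf A p.1 p.2 = Cpm.NE)).card
        + ∑ i ∈ Finset.Icc 1 n, μ i := by
  have hrowsum := hA.2.2.2.2.2.2.1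
  have hcolsum := hA.2.2.2.2.2.2.2
  set m := μ 1 + n with hm
  set G := Icc 1 n ×ˢ Icc 1 m with hG
  -- facts about the parts of λ
  have hlam_mem : ∀ k ∈ Icc 1 n, lamOf μ n k ∈ Icc 1 m := by
    intro k hk
    rw [mem_Icc] at hk ⊢
    have hmono := hanti 1 k le_rfl hk.1
    simp only [lamOf]
    rw [if_pos ⟨hk.1, hk.2⟩]
    omega
  have hlam_inj : ∀ k ∈ Icc 1 n, ∀ k' ∈ Icc 1 n, lamOf μ n k = lamOf μ n k' → k = k' := by
    intro k hk k' hk' heq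
    rw [mem_Icc] at hk hk'
    simp only [lamOf] at heq
    rw [if_pos ⟨hk.1, hk.2⟩, if_pos ⟨hk'.1, hk'.2⟩] at heq
    by_contra hne
    rcases Nat.lt_or_ge k k' with h | h
    · have := hanti k k' (by omega) (le_of_lt h); omega
    · have := hanti k' k (by omega) (by omega); omega
  have himg : ((Icc 1 m).filter fun j => ∃ k, 1 ≤ k ∧ k ≤ n ∧ lamOf μ n k = j)
      = (Icc 1 n).image (lamOf μ n) := by
    ext j
    simp only [mem_filter, mem_image, mem_Icc]
    constructor
    · rintro ⟨-, k, h1, h2, h3⟩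
      exact ⟨k, ⟨h1, h2⟩, h3⟩
    · rintro ⟨k, hk, h3⟩
      have hmem := hlam_mem k (by rw [mem_Icc]; exact hk)
      rw [mem_Icc] at hmem
      subst h3
      exact ⟨hmem, k, hk.1, hk.2, rfl⟩
  have hc1 : (∑ j ∈ Icc 1 m, (if ∃ k, 1 ≤ k ∧ k ≤ n ∧ lamOf μ n k = j then (1:ℤ) else 0))
      = (n : ℤ) := by
    rw [Finset.sum_boole, himg, Finset.card_image_of_injOn
      (fun a ha b hb h => hlam_inj a ha b hb h), Nat.card_Icc]
    norm_num
  have hc2 : (∑ j ∈ Icc 1 m, (j : ℤ) * (if ∃ k, 1 ≤ k ∧ k ≤ n ∧ lamOf μ n k = j then 1 else 0))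
      = ∑ k ∈ Icc 1 n, ((μ k : ℤ) + ((n : ℤ) + 1) - (k : ℤ)) := by
    simp only [mul_ite, mul_one, mul_zero]
    rw [← Finset.sum_filter, himg, Finset.sum_image hlam_inj]
    apply Finset.sum_congr rfl
    intro k hk
    rw [mem_Icc] at hk
    simp only [lamOf]
    rw [if_pos ⟨hk.1, hk.2⟩]
    omega
  -- column sums rewritten
  have hcol' : ∀ j ∈ Icc 1 m, (∑ i ∈ Icc 1 n, A i j)
      = (if ∃ k, 1 ≤ k ∧ k ≤ n ∧ lamOf μ n k = j then 1 else 0) := by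
    intro j hj; rw [mem_Icc] at hj; exact hcolsum j hj.1 hj.2
  -- T1 : sum of row prefix sums
  have hP : (∑ i ∈ Icc 1 n, ∑ j ∈ Icc 1 m, (j : ℤ) * A i j)
      = ∑ k ∈ Icc 1 n, ((μ k : ℤ) + ((n : ℤ) + 1) - (k : ℤ)) := by
    rw [Finset.sum_comm, ← hc2]
    apply Finset.sum_congr rfl
    intro j hj
    rw [← Finset.mul_sum, hcol' j hj]
  have hT1 : (∑ p ∈ G, ∑ j' ∈ Ico 1 p.2, A p.1 j')
      = (n : ℤ) * (m : ℤ) - ∑ k ∈ Icc 1 n, ((μ k : ℤ) + ((n : ℤ) + 1) - (k : ℤ)) := by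
    rw [hG, Finset.sum_product]
    have e2 : ∀ i ∈ Icc 1 n, (∑ j ∈ Icc 1 m, ∑ j' ∈ Ico 1 j, A i j')
        = (m : ℤ) - ∑ j ∈ Icc 1 m, (j : ℤ) * A i j := by
      intro i hi
      rw [mem_Icc] at hi
      rw [prefix_sum_swap]
      have : (∑ j' ∈ Icc 1 m, ((m : ℤ) - (j' : ℤ)) * A i j')
          = (m : ℤ) * (∑ j' ∈ Icc 1 m, A i j') - ∑ j' ∈ Icc 1 m, (j' : ℤ) * A i j' := by
        rw [Finset.mul_sum, ← Finset.sum_sub_distrib]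
        exact Finset.sum_congr rfl (fun x _ => by ring)
      rw [this, hrowsum i hi.1 hi.2, mul_one]
    rw [Finset.sum_congr rfl e2, Finset.sum_sub_distrib, hP, Finset.sum_const, Nat.card_Icc,
      nsmul_eq_mul]
    norm_num
  -- T2 : sum of column prefix sums
  have hT2 : (∑ p ∈ G, ∑ i' ∈ Ico 1 p.1, A i' p.2)
      = (n : ℤ) * (n : ℤ) - ∑ i ∈ Icc 1 n, (i : ℤ) := by
    rw [hG, Finset.sum_product, Finset.sum_comm]
    have e2 : ∀ j ∈ Icc 1 m, (∑ i ∈ Icc 1 n, ∑ i' ∈ Ico 1 i, A i' j)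
        = (n : ℤ) * (if ∃ k, 1 ≤ k ∧ k ≤ n ∧ lamOf μ n k = j then 1 else 0)
          - ∑ i ∈ Icc 1 n, (i : ℤ) * A i j := by
      intro j hj
      rw [prefix_sum_swap n (fun i => A i j)]
      have : (∑ i' ∈ Icc 1 n, ((n : ℤ) - (i' : ℤ)) * A i' j)
          = (n : ℤ) * (∑ i' ∈ Icc 1 n, A i' j) - ∑ i' ∈ Icc 1 n, (i' : ℤ) * A i' j := by
        rw [Finset.mul_sum, ← Finset.sum_sub_distrib]
        exact Finset.sum_congr rfl (fun x _ => by ring)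
      rw [this, hcol' j hj]
    rw [Finset.sum_congr rfl e2, Finset.sum_sub_distrib, ← Finset.mul_sum, hc1]
    have f2 : (∑ j ∈ Icc 1 m, ∑ i ∈ Icc 1 n, (i : ℤ) * A i j) = ∑ i ∈ Icc 1 n, (i : ℤ) := by
      rw [Finset.sum_comm]
      apply Finset.sum_congr rfl
      intro i hi
      rw [mem_Icc] at hi
      rw [← Finset.mul_sum, hrowsum i hi.1 hi.2, mul_one]
    rw [f2]
  -- T3 : total sum of entries
  have hT3 : (∑ p ∈ G, A p.1 p.2) = (n : ℤ) := by
    rw [hG, Finset.sum_product]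
    have : ∀ i ∈ Icc 1 n, (∑ j ∈ Icc 1 m, A i j) = (1:ℤ) := by
      intro i hi; rw [mem_Icc] at hi; exact hrowsum i hi.1 hi.2
    rw [Finset.sum_congr rfl this, Finset.sum_const, Nat.card_Icc, nsmul_eq_mul]
    norm_num
  -- T0 : number of cells
  have hT0 : (∑ _p ∈ G, (1 : ℤ)) = (n : ℤ) * (m : ℤ) := by
    rw [Finset.sum_const, hG, Finset.card_product, Nat.card_Icc, Nat.card_Icc, nsmul_eq_mul]
    push_cast
    ring
  -- the key cellwise identity, summed
  have hkey : (∑ p ∈ G, ((1 : ℤ) - (∑ j' ∈ Ico 1 p.2, A p.1 j')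
        - (∑ i' ∈ Ico 1 p.1, A i' p.2) - A p.1 p.2))
      = ((G.filter fun p => cpmOf A p.1 p.2 = Cpm.SW).card : ℤ)
        - ((G.filter fun p => cpmOf A p.1 p.2 = Cpm.NE).card : ℤ) := by
    have h1 : ∀ p ∈ G, ((1 : ℤ) - (∑ j' ∈ Ico 1 p.2, A p.1 j')
        - (∑ i' ∈ Ico 1 p.1, A i' p.2) - A p.1 p.2)
        = (if cpmOf A p.1 p.2 = Cpm.SW then 1 else 0)
          - (if cpmOf A p.1 p.2 = Cpm.NE then 1 else 0) := by
      intro p hp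
      rw [hG, Finset.mem_product, mem_Icc, mem_Icc] at hp
      exact cell_id hA hp.1.1 hp.1.2 hp.2.1
    rw [Finset.sum_congr rfl h1, Finset.sum_sub_distrib, Finset.sum_boole, Finset.sum_boole]
  -- expand the left side of hkey
  have hexp : (∑ p ∈ G, ((1 : ℤ) - (∑ j' ∈ Ico 1 p.2, A p.1 j')
        - (∑ i' ∈ Ico 1 p.1, A i' p.2) - A p.1 p.2))
      = (∑ _p ∈ G, (1 : ℤ)) - (∑ p ∈ G, ∑ j' ∈ Ico 1 p.2, A p.1 j')
        - (∑ p ∈ G, ∑ i' ∈ Ico 1 p.1, A i' p.2) - (∑ p ∈ G, A p.1 p.2) := by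
    rw [← Finset.sum_sub_distrib, ← Finset.sum_sub_distrib, ← Finset.sum_sub_distrib]
  -- the arithmetic of the λ-sum
  have hlamsum : (∑ k ∈ Icc 1 n, ((μ k : ℤ) + ((n : ℤ) + 1) - (k : ℤ)))
      = (∑ i ∈ Icc 1 n, (μ i : ℤ)) + (n : ℤ) * ((n : ℤ) + 1) - ∑ i ∈ Icc 1 n, (i : ℤ) := by
    rw [Finset.sum_sub_distrib, Finset.sum_add_distrib, Finset.sum_const, Nat.card_Icc,
      nsmul_eq_mul]
    norm_num
  have hMu : ((∑ i ∈ Icc 1 n, μ i : ℕ) : ℤ) = ∑ i ∈ Icc 1 n, (μ i : ℤ) := by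
    push_cast
    rfl
  have hfinal : (((G.filter fun p => cpmOf A p.1 p.2 = Cpm.SW).card : ℤ))
      = ((G.filter fun p => cpmOf A p.1 p.2 = Cpm.NE).card : ℤ)
        + ((∑ i ∈ Icc 1 n, μ i : ℕ) : ℤ) := by
    rw [hMu]
    have := hkey
    rw [hexp, hT0, hT1, hT2, hT3, hlamsum] at this
    linarith
  exact_mod_cast hfinal
end
end

section
/- For a strict partition λ of length n, the weighted sum over primed shifted tableaux equals the weighted sum over unprimed shifted tableaux: Σ_{P ∈ P^λ(n,n')} wgt(P) = Σ_{S ∈ S^λ(n)} wgt(S), where wgt(S) = Π_{(i,j) ∈ SF^λ} w(s_{ij}) with w(s_{ii}) = x_k if s_{ii} = k, and for i < j: w(s_{ij}) = x_k + a_{j−i} if s_{ij} = k = s_{i,j−1}; w(s_{ij}) = y_k − a_{j−i} if s_{ij} = k = s_{i+1,j}; and w(s_{ij}) = x_k + y_k if s_{ij} = k but neither s_{i,j−1} nor s_{i+1,j} equals k. -/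
open Finset

noncomputable section
open Classical

variable {R : Type*} [CommRing R]

/-- Boxes `(i,j)` of the shifted Young diagram of a strict partition `λ`:
row `i` occupies columns `i, i+1, …, i+λ_i−1`, for `1 ≤ i ≤ n`. -/
def sBoxes (lam : ℕ → ℕ) (n : ℕ) : Finset (ℕ × ℕ) :=
  (Finset.Icc 1 n ×ˢ Finset.Icc 1 (n + lam 1)).filter
    fun p => p.1 ≤ p.2 ∧ p.2 < p.1 + lam p.1

/-- Position of an entry of the primed alphabet `1' < 1 < 2' < 2 < ⋯ < n' < n`;
`(k, true)` encodes `(k+1)'` and `(k, false)` encodes `k+1`. -/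
def ordval {n : ℕ} (e : Fin n × Bool) : ℕ :=
  2 * e.1.1 + (if e.2 then 1 else 2)

/-- Primed shifted tableau conditions (P1–P4): rows and columns weakly increase,
each primed letter occurs at most once per row, each unprimed letter at most once
per column. -/
def IsPst (lam : ℕ → ℕ) (n : ℕ) (P : sBoxes lam n → Fin n × Bool) : Prop :=
  (∀ b b' : sBoxes lam n, b.1.1 = b'.1.1 → b.1.2 ≤ b'.1.2 → ordval (P b) ≤ ordval (P b')) ∧
  (∀ b b' : sBoxes lam n, b.1.2 = b'.1.2 → b.1.1 ≤ b'.1.1 → ordval (P b) ≤ ordval (P b')) ∧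
  (∀ b b' : sBoxes lam n, b ≠ b' → b.1.1 = b'.1.1 → (P b).2 = true → P b ≠ P b') ∧
  (∀ b b' : sBoxes lam n, b ≠ b' → b.1.2 = b'.1.2 → (P b).2 = false → P b ≠ P b')

/-- Condition (P5): no primed entries on the main diagonal. -/
def NoDiagPrime (lam : ℕ → ℕ) (n : ℕ) (P : sBoxes lam n → Fin n × Bool) : Prop :=
  ∀ b : sBoxes lam n, b.1.1 = b.1.2 → (P b).2 = false

/-- Weight of an entry of a primed shifted tableau in box `(i,j)` (for `P_λ`, with
`a_0 = 0`): an unprimed `k` contributes `x_k + a_{j-i}`, a primed `k'` contributes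
`y_k − a_{j-i}`. -/
def pWgt {n : ℕ} (x y a : ℕ → R) (b : ℕ × ℕ) (e : Fin n × Bool) : R :=
  if e.2 then y (e.1.1 + 1) - a (b.2 - b.1) else x (e.1.1 + 1) + a (b.2 - b.1)

/-- The factorial generalised Schur `P`-function `P_λ(x;y|a)` (take `a 0 = 0`). -/
def Pfun (lam : ℕ → ℕ) (n : ℕ) (x y a : ℕ → R) : R :=
  ∑ P ∈ Finset.univ.filter (fun P => IsPst lam n P ∧ NoDiagPrime lam n P),
    ∏ b : sBoxes lam n, pWgt x y a b.1 (P b)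

/-- Weight of an entry for `Q_λ`: a diagonal `k` contributes `x_k`, a diagonal `k'`
contributes `y_k`; off the diagonal as for `P_λ`. -/
def qWgt {n : ℕ} (x y a : ℕ → R) (b : ℕ × ℕ) (e : Fin n × Bool) : R :=
  if b.1 = b.2 then (if e.2 then y (e.1.1 + 1) else x (e.1.1 + 1))
  else (if e.2 then y (e.1.1 + 1) - a (b.2 - b.1) else x (e.1.1 + 1) + a (b.2 - b.1))

/-- The factorial generalised Schur `Q`-function `Q_λ(x;y|a)`. -/
def Qfun (lam : ℕ → ℕ) (n : ℕ) (x y a : ℕ → R) : R :=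
  ∑ P ∈ Finset.univ.filter (fun P => IsPst lam n P),
    ∏ b : sBoxes lam n, qWgt x y a b.1 (P b)

/-- Unprimed shifted tableau: rows and columns weakly increase, and entries strictly
increase along each diagonal step `(i,j) → (i+1,j+1)`. -/
def IsSt (lam : ℕ → ℕ) (n : ℕ) (S : sBoxes lam n → Fin n) : Prop :=
  (∀ b b' : sBoxes lam n, b.1.1 = b'.1.1 → b.1.2 ≤ b'.1.2 → S b ≤ S b') ∧
  (∀ b b' : sBoxes lam n, b.1.2 = b'.1.2 → b.1.1 ≤ b'.1.1 → S b ≤ S b') ∧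
  (∀ b b' : sBoxes lam n, b.1.1 + 1 = b'.1.1 → b.1.2 + 1 = b'.1.2 → S b < S b')

/-- The weight of an entry `k = (S b).1 + 1` of an unprimed shifted tableau `S` in box
`b = (i,j)`: `x_k` on the diagonal; off the diagonal, `x_k + a_{j−i}` if the box to its
left carries the same entry, `y_k − a_{j−i}` if the box below carries the same entry,
and `x_k + y_k` otherwise. -/
def sWgt (lam : ℕ → ℕ) (n : ℕ) (x y a : ℕ → R) (S : sBoxes lam n → Fin n)
    (b : sBoxes lam n) : R :=
  if b.1.1 = b.1.2 then x ((S b).1 + 1)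
  else if ∃ b' : sBoxes lam n, b'.1.1 = b.1.1 ∧ b'.1.2 + 1 = b.1.2 ∧ S b' = S b then
    x ((S b).1 + 1) + a (b.1.2 - b.1.1)
  else if ∃ b' : sBoxes lam n, b'.1.1 = b.1.1 + 1 ∧ b'.1.2 = b.1.2 ∧ S b' = S b then
    y ((S b).1 + 1) - a (b.1.2 - b.1.1)
  else x ((S b).1 + 1) + y ((S b).1 + 1)

/-!
Forgetting the primes sends a primed tableau `P` to the tableau `S` of its letters. The pair
`(S, markings)` is a primed tableau exactly when `S` is a shifted tableau and each box carries an
admissible marking: unprimed on the diagonal or when the left neighbour has the same letter,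
primed when the box below has the same letter (by diagonal strictness these never clash), and
free otherwise. Diagonal strictness itself comes from the prime rules: a letter repeated at
`(i,j)`, `(i,j+1)`, `(i+1,j+1)` would force the middle entry to be both primed and unprimed.
As the markings are chosen independently box by box, the primed tableaux over `S` contribute
`∏ (sum of admissible weights)`, which is `wgt(S)`, using `a₀ = 0` on the diagonal.
-/

section Shape

variable {lam : ℕ → ℕ} {n : ℕ}

lemma mem_sBoxes {p : ℕ × ℕ} :
    p ∈ sBoxes lam n ↔ 1 ≤ p.1 ∧ p.1 ≤ n ∧ 1 ≤ p.2 ∧ p.2 ≤ n + lam 1 ∧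
      p.1 ≤ p.2 ∧ p.2 < p.1 + lam p.1 := by
  simp only [sBoxes, mem_filter, mem_product, mem_Icc]
  tauto

lemma add_lam_le_add_lam (hstrict : ∀ i j, 1 ≤ i → i < j → j ≤ n → lam j < lam i)
    {p q : ℕ} (hp : 1 ≤ p) (hpq : p ≤ q) (hq : q ≤ n) : q + lam q ≤ p + lam p := by
  induction q, hpq using Nat.le_induction with
  | base => rfl
  | succ m hpm ih =>
    have := hstrict m (m + 1) (by omega) (by omega) hq
    have := ih (by omega)
    omega

lemma left_mem_sBoxes (b : sBoxes lam n) (h : b.1.1 < b.1.2) :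
    (b.1.1, b.1.2 - 1) ∈ sBoxes lam n := by
  have hb := mem_sBoxes.mp b.2
  rw [mem_sBoxes]
  dsimp only
  omega

lemma below_mem_sBoxes (hstrict : ∀ i j, 1 ≤ i → i < j → j ≤ n → lam j < lam i)
    (b b' : sBoxes lam n) (hcol : b.1.2 = b'.1.2) (hrow : b.1.1 < b'.1.1) :
    (b.1.1 + 1, b.1.2) ∈ sBoxes lam n := by
  have hb := mem_sBoxes.mp b.2
  have hb' := mem_sBoxes.mp b'.2
  have := add_lam_le_add_lam hstrict (p := b.1.1 + 1) (q := b'.1.1) (by omega) hrow hb'.2.1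
  rw [mem_sBoxes]
  dsimp only
  omega

lemma right_mem_sBoxes (hstrict : ∀ i j, 1 ≤ i → i < j → j ≤ n → lam j < lam i)
    (b b' : sBoxes lam n) (hrow : b.1.1 + 1 = b'.1.1) (hcol : b.1.2 + 1 = b'.1.2) :
    (b.1.1, b.1.2 + 1) ∈ sBoxes lam n := by
  have hb := mem_sBoxes.mp b.2
  have hb' := mem_sBoxes.mp b'.2
  have := add_lam_le_add_lam hstrict (p := b.1.1) (q := b'.1.1) hb.1 (by omega) hb'.2.1
  rw [mem_sBoxes]
  dsimp only
  omega

end Shape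

lemma ordval_le_ordval_iff {n : ℕ} (e e' : Fin n × Bool) :
    ordval e ≤ ordval e' ↔ e.1 < e'.1 ∨ e.1 = e'.1 ∧ (e.2 = true ∨ e'.2 = false) := by
  obtain ⟨⟨k, hk⟩, _ | _⟩ := e <;> obtain ⟨⟨k', hk'⟩, _ | _⟩ := e' <;>
    simp [ordval, Fin.lt_def] <;> omega

lemma ordval_le_ordval_rev_iff {n : ℕ} (e e' : Fin n × Bool) :
    ordval (e'.1.rev, !e'.2) ≤ ordval (e.1.rev, !e.2) ↔ ordval e ≤ ordval e' := by
  simp only [ordval_le_ordval_iff, Fin.rev_lt_rev, Fin.rev_inj, eq_comm (a := e'.1)]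
  cases e.2 <;> cases e'.2 <;> simp

section Lines

variable {β γ δ : Type*} [LinearOrder δ] {n : ℕ} (line : β → γ) (pos : β → δ)

lemma ordval_mono_and_primed_once_iff
    (hinj : ∀ b b', line b = line b' → pos b = pos b' → b = b') (P : β → Fin n × Bool) :
    ((∀ b b', line b = line b' → pos b ≤ pos b' → ordval (P b) ≤ ordval (P b')) ∧
      (∀ b b', b ≠ b' → line b = line b' → (P b).2 = true → P b ≠ P b')) ↔
    ((∀ b b', line b = line b' → pos b ≤ pos b' → (P b).1 ≤ (P b').1) ∧
      (∀ b b', line b = line b' → pos b < pos b' → (P b).1 = (P b').1 → (P b').2 = false)) := by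
  simp only [ordval_le_ordval_iff]
  constructor
  · rintro ⟨hmono, honce⟩
    refine ⟨fun b b' hl hp => ?_, fun b b' hl hp heq => ?_⟩
    · rcases hmono b b' hl hp with h | ⟨h, -⟩
      exacts [h.le, h.le]
    · by_contra hprimed
      rw [Bool.not_eq_false] at hprimed
      rcases hmono b b' hl hp.le with h | ⟨-, h | h⟩
      · exact h.ne heq
      · exact honce b b' (fun h' => hp.ne (congrArg pos h')) hl h
          (Prod.ext heq (h.trans hprimed.symm))
      · exact Bool.false_ne_true (h.symm.trans hprimed)
  · rintro ⟨hmono, hrep⟩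
    refine ⟨fun b b' hl hp => ?_, fun b b' hne hl hb heq => ?_⟩
    · rcases (hmono b b' hl hp).lt_or_eq with h | h
      · exact Or.inl h
      rcases hp.lt_or_eq with hp | hp
      · exact Or.inr ⟨h, Or.inr (hrep b b' hl hp h)⟩
      · rw [hinj b b' hl hp]
        exact Or.inr ⟨rfl, (P b').2.eq_false_or_eq_true⟩
    · rcases lt_trichotomy (pos b) (pos b') with hp | hp | hp
      · have := hrep b b' hl hp (congrArg Prod.fst heq)
        rw [← heq, hb] at this
        exact Bool.noConfusion this
      · exact hne (hinj b b' hl hp)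
      · have := hrep b' b hl.symm hp (congrArg Prod.fst heq.symm)
        rw [hb] at this
        exact Bool.noConfusion this

lemma ordval_mono_and_unprimed_once_iff
    (hinj : ∀ b b', line b = line b' → pos b = pos b' → b = b') (P : β → Fin n × Bool) :
    ((∀ b b', line b = line b' → pos b ≤ pos b' → ordval (P b) ≤ ordval (P b')) ∧
      (∀ b b', b ≠ b' → line b = line b' → (P b).2 = false → P b ≠ P b')) ↔
    ((∀ b b', line b = line b' → pos b ≤ pos b' → (P b).1 ≤ (P b').1) ∧
      (∀ b b', line b = line b' → pos b < pos b' → (P b).1 = (P b').1 → (P b).2 = true)) := by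
  -- Reversing the alphabet (`Fin.rev`, swapping primes) and the order along the line turns
  -- the column conditions into the row conditions.
  have dual := ordval_mono_and_primed_once_iff line (fun b => OrderDual.toDual (pos b))
    (fun b b' hl hp => hinj b b' hl hp) (fun b => ((P b).1.rev, !(P b).2))
  simp only [ordval_le_ordval_rev_iff, OrderDual.toDual_le_toDual, OrderDual.toDual_lt_toDual,
    Fin.rev_le_rev, Fin.rev_inj, Bool.not_eq_true', Bool.not_eq_false', ne_eq, Prod.ext_iff,
    Bool.not_inj_iff] at dual
  simp only [ne_eq, Prod.ext_iff]
  constructor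
  · rintro ⟨hmono, honce⟩
    obtain ⟨hmono', hrep⟩ := dual.mp ⟨fun b b' hl hp => hmono b' b hl.symm hp, honce⟩
    exact ⟨fun b b' hl hp => hmono' b' b hl.symm hp,
      fun b b' hl hp he => hrep b' b hl.symm hp he.symm⟩
  · rintro ⟨hmono, hrep⟩
    obtain ⟨hmono', honce⟩ := dual.mpr
      ⟨fun b b' hl hp => hmono b' b hl.symm hp,
        fun b b' hl hp he => hrep b' b hl.symm hp he.symm⟩
    exact ⟨fun b b' hl hp => hmono' b' b hl.symm hp, honce⟩

end Lines

section Tableaux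

variable {lam : ℕ → ℕ} {n : ℕ}

lemma isPst_iff (P : sBoxes lam n → Fin n × Bool) :
    IsPst lam n P ↔
      ((∀ b b' : sBoxes lam n, b.1.1 = b'.1.1 → b.1.2 ≤ b'.1.2 → (P b).1 ≤ (P b').1) ∧
        ∀ b b' : sBoxes lam n, b.1.1 = b'.1.1 → b.1.2 < b'.1.2 → (P b).1 = (P b').1 →
          (P b').2 = false) ∧
      ((∀ b b' : sBoxes lam n, b.1.2 = b'.1.2 → b.1.1 ≤ b'.1.1 → (P b).1 ≤ (P b').1) ∧
        ∀ b b' : sBoxes lam n, b.1.2 = b'.1.2 → b.1.1 < b'.1.1 → (P b).1 = (P b').1 →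
          (P b).2 = true) := by
  have hinj : ∀ b b' : sBoxes lam n, b.1.1 = b'.1.1 → b.1.2 = b'.1.2 → b = b' :=
    fun b b' h₁ h₂ => Subtype.ext (Prod.ext h₁ h₂)
  have hrow := ordval_mono_and_primed_once_iff (fun b => b.1.1) (fun b => b.1.2) hinj P
  have hcol := ordval_mono_and_unprimed_once_iff (fun b => b.1.2) (fun b => b.1.1)
    (fun b b' h₁ h₂ => hinj b b' h₂ h₁) P
  exact ⟨fun ⟨h₁, h₂, h₃, h₄⟩ => ⟨hrow.mp ⟨h₁, h₃⟩, hcol.mp ⟨h₂, h₄⟩⟩,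
    fun ⟨hr, hc⟩ => ⟨(hrow.mpr hr).1, (hcol.mpr hc).1, (hrow.mpr hr).2, (hcol.mpr hc).2⟩⟩

def SameAsLeft (S : sBoxes lam n → Fin n) (b : sBoxes lam n) : Prop :=
  ∃ b' : sBoxes lam n, b'.1.1 = b.1.1 ∧ b'.1.2 + 1 = b.1.2 ∧ S b' = S b

def SameAsBelow (S : sBoxes lam n → Fin n) (b : sBoxes lam n) : Prop :=
  ∃ b' : sBoxes lam n, b'.1.1 = b.1.1 + 1 ∧ b'.1.2 = b.1.2 ∧ S b' = S b

def primeMarks (S : sBoxes lam n → Fin n) (b : sBoxes lam n) : Finset Bool :=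
  if b.1.1 = b.1.2 ∨ SameAsLeft S b then {false}
  else if SameAsBelow S b then {true} else univ

lemma sameAsLeft_of_eq {S : sBoxes lam n → Fin n} (hS : IsSt lam n S) {b b' : sBoxes lam n}
    (hrow : b.1.1 = b'.1.1) (hcol : b.1.2 < b'.1.2) (heq : S b = S b') : SameAsLeft S b' := by
  have hb := mem_sBoxes.mp b.2
  let c : sBoxes lam n := ⟨_, left_mem_sBoxes b' (by omega)⟩
  have hbc : S b ≤ S c := hS.1 b c hrow (by dsimp [c]; omega)
  have hcb' : S c ≤ S b' := hS.1 c b' rfl (by dsimp [c]; omega)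
  exact ⟨c, rfl, by dsimp [c]; omega, hcb'.antisymm (heq ▸ hbc)⟩

lemma sameAsBelow_of_eq (hstrict : ∀ i j, 1 ≤ i → i < j → j ≤ n → lam j < lam i)
    {S : sBoxes lam n → Fin n} (hS : IsSt lam n S) {b b' : sBoxes lam n}
    (hcol : b.1.2 = b'.1.2) (hrow : b.1.1 < b'.1.1) (heq : S b = S b') : SameAsBelow S b := by
  let c : sBoxes lam n := ⟨_, below_mem_sBoxes hstrict b b' hcol hrow⟩
  have hbc : S b ≤ S c := hS.2.1 b c rfl (by dsimp [c]; omega)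
  have hcb' : S c ≤ S b' := hS.2.1 c b' hcol (by dsimp [c]; omega)
  exact ⟨c, rfl, rfl, (heq ▸ hcb').antisymm hbc⟩

lemma SameAsBelow.ne_diag {S : sBoxes lam n → Fin n} {b : sBoxes lam n}
    (h : SameAsBelow S b) : b.1.1 ≠ b.1.2 := by
  obtain ⟨b', hrow, hcol, -⟩ := h
  have := mem_sBoxes.mp b'.2
  omega

lemma SameAsBelow.not_sameAsLeft {S : sBoxes lam n → Fin n} (hS : IsSt lam n S)
    {b : sBoxes lam n} (h : SameAsBelow S b) : ¬ SameAsLeft S b := by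
  obtain ⟨c, hc₁, hc₂, hc⟩ := h
  rintro ⟨d, hd₁, hd₂, hd⟩
  exact (hS.2.2 d c (by omega) (by omega)).ne (hd.trans hc.symm)

lemma mem_primeMarks_iff {S : sBoxes lam n → Fin n} (hS : IsSt lam n S) (b : sBoxes lam n)
    (v : Bool) :
    v ∈ primeMarks S b ↔ (b.1.1 = b.1.2 → v = false) ∧ (SameAsLeft S b → v = false) ∧
      (SameAsBelow S b → v = true) := by
  unfold primeMarks
  split_ifs with hfalse htrue
  · have hbelow := fun h : SameAsBelow S b => h.ne_diag (hfalse.resolve_right (h.not_sameAsLeft hS))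
    rcases hfalse with h | h <;> simp_all
  · simp_all
  · simp_all

lemma isPst_and_noDiagPrime_iff (hstrict : ∀ i j, 1 ≤ i → i < j → j ≤ n → lam j < lam i)
    (S : sBoxes lam n → Fin n) (ε : sBoxes lam n → Bool) :
    (IsPst lam n (fun b => (S b, ε b)) ∧ NoDiagPrime lam n (fun b => (S b, ε b))) ↔
      IsSt lam n S ∧ ∀ b, ε b ∈ primeMarks S b := by
  rw [isPst_iff]
  constructor
  · rintro ⟨⟨⟨hrow, hrowRep⟩, hcol, hcolRep⟩, hdiag⟩
    have hS : IsSt lam n S := by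
      refine ⟨hrow, hcol, fun b b' h₁ h₂ => lt_of_not_ge fun hb'b => ?_⟩
      -- Otherwise the right neighbour `c` of `b` repeats a letter both in its row and in its
      -- column, so it is unprimed and primed.
      let c : sBoxes lam n := ⟨_, right_mem_sBoxes hstrict b b' h₁ h₂⟩
      have hbc : S b ≤ S c := hrow b c rfl (by dsimp [c]; omega)
      have hcb' : S c ≤ S b' := hcol c b' h₂ (by dsimp [c]; omega)
      have hunprimed := hrowRep b c rfl (by dsimp [c]; omega) (hbc.antisymm (hcb'.trans hb'b))
      have hprimed := hcolRep c b' h₂ (by dsimp [c]; omega) (hcb'.antisymm (hb'b.trans hbc))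
      exact Bool.noConfusion (hprimed.symm.trans hunprimed)
    refine ⟨hS, fun b => (mem_primeMarks_iff hS b _).mpr ⟨hdiag b, ?_, ?_⟩⟩
    · rintro ⟨b', hrow', hcol', heq⟩
      exact hrowRep b' b hrow' (by omega) heq
    · rintro ⟨b', hrow', hcol', heq⟩
      exact hcolRep b b' hcol'.symm (by omega) heq.symm
  · rintro ⟨hS, hmarks⟩
    have hmarks' := fun b => (mem_primeMarks_iff hS b (ε b)).mp (hmarks b)
    refine ⟨⟨⟨hS.1, fun b b' hrow hcol heq => ?_⟩, hS.2.1, fun b b' hcol hrow heq => ?_⟩,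
      fun b => (hmarks' b).1⟩
    · exact (hmarks' b').2.1 (sameAsLeft_of_eq hS hrow hcol heq)
    · exact (hmarks' b).2.2 (sameAsBelow_of_eq hstrict hS hcol hrow heq)

lemma sum_primeMarks_pWgt {x y a : ℕ → R} (ha0 : a 0 = 0) (S : sBoxes lam n → Fin n)
    (b : sBoxes lam n) :
    ∑ v ∈ primeMarks S b, pWgt x y a b.1 (S b, v) = sWgt lam n x y a S b := by
  have hleft_iff : (∃ b' : sBoxes lam n, b'.1.1 = b.1.1 ∧ b'.1.2 + 1 = b.1.2 ∧ S b' = S b) ↔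
      SameAsLeft S b := Iff.rfl
  have hbelow_iff : (∃ b' : sBoxes lam n, b'.1.1 = b.1.1 + 1 ∧ b'.1.2 = b.1.2 ∧ S b' = S b) ↔
      SameAsBelow S b := Iff.rfl
  unfold primeMarks sWgt
  simp only [hleft_iff, hbelow_iff]
  by_cases hdiag : b.1.1 = b.1.2
  · rw [if_pos (Or.inl hdiag), if_pos hdiag, sum_singleton, pWgt, hdiag, Nat.sub_self, ha0]
    simp
  by_cases hleft : SameAsLeft S b
  · rw [if_pos (Or.inr hleft), if_neg hdiag, if_pos hleft, sum_singleton, pWgt]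
    simp
  rw [if_neg (not_or_intro hdiag hleft), if_neg hdiag, if_neg hleft]
  by_cases hbelow : SameAsBelow S b
  · rw [if_pos hbelow, if_pos hbelow, sum_singleton, pWgt]
    simp
  rw [if_neg hbelow, if_neg hbelow, Fintype.sum_bool, pWgt, pWgt]
  simp only [if_true, Bool.false_eq_true, if_false]
  ring

end Tableaux

lemma sum_markings_pWgt {lam : ℕ → ℕ} {n : ℕ}
    (hstrict : ∀ i j, 1 ≤ i → i < j → j ≤ n → lam j < lam i) {x y a : ℕ → R} (ha0 : a 0 = 0)
    (S : sBoxes lam n → Fin n) :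
    (∑ ε : sBoxes lam n → Bool,
        if IsPst lam n (fun b => (S b, ε b)) ∧ NoDiagPrime lam n (fun b => (S b, ε b)) then
          ∏ b, pWgt x y a b.1 (S b, ε b)
        else 0) =
      if IsSt lam n S then ∏ b, sWgt lam n x y a S b else 0 := by
  simp only [isPst_and_noDiagPrime_iff hstrict]
  split_ifs with hS
  · simp only [hS, true_and, ← Fintype.mem_piFinset, sum_ite_mem, univ_inter]
    rw [← prod_univ_sum (primeMarks S) fun b v => pWgt x y a b.1 (S b, v)]
    exact prod_congr rfl fun b _ => sum_primeMarks_pWgt ha0 S b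
  · simp [hS]

theorem primed_sum_eq_shifted_sum_general (n : ℕ) (lam : ℕ → ℕ)
    (hstrict : ∀ i j, 1 ≤ i → i < j → j ≤ n → lam j < lam i)
    (x y a : ℕ → R) (ha0 : a 0 = 0) :
    Pfun lam n x y a =
      ∑ S ∈ Finset.univ.filter (IsSt lam n), ∏ b : sBoxes lam n, sWgt lam n x y a S b := by
  let unzip := Equiv.arrowProdEquivProdArrow (sBoxes lam n) (fun _ => Fin n) (fun _ => Bool)
  rw [Pfun, sum_filter, sum_filter, ← unzip.symm.sum_comp, Fintype.sum_prod_type]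
  exact sum_congr rfl fun S _ => sum_markings_pWgt hstrict ha0 S

/-- for a strict partition `λ` of length `n`, the weighted sum over
primed shifted tableaux equals the weighted sum over unprimed shifted tableaux,
`Σ_{P ∈ P^λ(n,n')} wgt(P) = Σ_{S ∈ S^λ(n)} wgt(S)` (with `a_0 = 0`, so that diagonal
entries of a primed tableau contribute `x_k`). -/
theorem primed_sum_eq_shifted_sum (n : ℕ) (hn : 1 ≤ n) (lam : ℕ → ℕ)
    (hstrict : ∀ i j, 1 ≤ i → i < j → j ≤ n → lam j < lam i) (hpos : 1 ≤ lam n)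
    (hlen : ∀ i, n < i → lam i = 0) (x y a : ℕ → R) (ha0 : a 0 = 0) :
    Pfun lam n x y a =
      ∑ S ∈ Finset.univ.filter (IsSt lam n), ∏ b : sBoxes lam n, sWgt lam n x y a S b :=
  primed_sum_eq_shifted_sum_general n lam hstrict x y a ha0
end
end

section
/- Let λ be a strict partition of length n and breadth m = λ_1. The map described below is a bijection between the set S^λ([n]) of shifted tableaux of shape λ with entries in {1,…,n} and the set A^λ of n×m alternating sign matrices of class λ: given S, set a_{ij} = 1 if (j = m and diagonal m of S contains i) or (j < m and diagonal j of S contains i but diagonal j+1 does not); a_{ij} = −1 if j < m and diagonal j+1 of S contains i but diagonal j does not; and a_{ij} = 0 otherwise. (Diagonal d of S consists of the boxes (i,j) of the shifted diagram with j − i + 1 = d.) -/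
open Finset

noncomputable section
open Classical

variable {R : Type*} [CommRing R]

/-- "Diagonal `d` of the shifted tableau `S` contains the entry `i`": there is a box
`(r,c)` of the shifted diagram with `c − r + 1 = d` whose entry is `i`. -/
def DiagHas (lam : ℕ → ℕ) (n : ℕ) (S : sBoxes lam n → Fin n) (d i : ℕ) : Prop :=
  ∃ b : sBoxes lam n, b.1.2 + 1 = b.1.1 + d ∧ (S b).1 + 1 = i

/-- The `n × m` alternating sign matrix attached to a shifted tableau `S`:
`a_{ij} = 1` if (`j = m` and diagonal `m` of `S` contains `i`) or (`j < m` and diagonal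
`j` contains `i` but diagonal `j+1` does not); `a_{ij} = −1` if `j < m` and diagonal
`j+1` contains `i` but diagonal `j` does not; `a_{ij} = 0` otherwise. -/
def asmOf (lam : ℕ → ℕ) (n m : ℕ) (S : sBoxes lam n → Fin n) : ℕ → ℕ → ℤ :=
  fun i j =>
    if 1 ≤ i ∧ i ≤ n ∧ 1 ≤ j ∧ j ≤ m then
      if (j = m ∧ DiagHas lam n S m i) ∨
          (j < m ∧ DiagHas lam n S j i ∧ ¬DiagHas lam n S (j + 1) i) then 1
      else if j < m ∧ DiagHas lam n S (j + 1) i ∧ ¬DiagHas lam n S j i then -1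
      else 0
    else 0

section AuxJW

variable {lam : ℕ → ℕ} {n : ℕ}

/-- Bundle of hypotheses on the strict partition. -/
structure GoodJW (lam : ℕ → ℕ) (n : ℕ) : Prop where
  hn : 1 ≤ n
  hstrict : ∀ i j, 1 ≤ i → i < j → j ≤ n → lam j < lam i
  hpos : 1 ≤ lam n
  hlen : ∀ i, n < i → lam i = 0

theorem GoodJW.anti (hG : GoodJW lam n) {i j : ℕ} (h1 : 1 ≤ i) (h2 : i ≤ j) (h3 : j ≤ n) :
    lam j ≤ lam i := by
  rcases eq_or_lt_of_le h2 with rfl | h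
  · exact le_rfl
  · exact (hG.hstrict i j h1 h h3).le

theorem GoodJW.pos (hG : GoodJW lam n) {i : ℕ} (h1 : 1 ≤ i) (h2 : i ≤ n) : 1 ≤ lam i :=
  le_trans hG.hpos (hG.anti h1 h2 le_rfl)

theorem GoodJW.le_m (hG : GoodJW lam n) {i : ℕ} (h1 : 1 ≤ i) (h2 : i ≤ n) : lam i ≤ lam 1 :=
  hG.anti le_rfl h1 h2

/-- Number of boxes on diagonal `d`. -/
def rhoJW (lam : ℕ → ℕ) (n d : ℕ) : ℕ := Nat.findGreatest (fun r => d ≤ lam r) n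

theorem rho_le_n : rhoJW lam n d ≤ n := Nat.findGreatest_le n

theorem rho_spec (hG : GoodJW lam n) {d : ℕ} (h : 1 ≤ rhoJW lam n d) : d ≤ lam (rhoJW lam n d) :=
  (Nat.findGreatest_eq_iff.1 (rfl : rhoJW lam n d = _)).2.1 (by omega)

theorem le_rho (hr : r ≤ n) (h : d ≤ lam r) : r ≤ rhoJW lam n d :=
  Nat.le_findGreatest hr h

theorem rho_lt (hG : GoodJW lam n) {d r : ℕ} (h1 : rhoJW lam n d < r) (h2 : r ≤ n) :
    lam r < d := by
  by_contra h
  exact absurd (le_rho (lam := lam) (d := d) h2 (by omega)) (by omega)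

theorem mem_rho (hG : GoodJW lam n) {d r : ℕ} (h1 : 1 ≤ r) (h2 : r ≤ n) :
    d ≤ lam r ↔ r ≤ rhoJW lam n d := by
  constructor
  · exact le_rho h2
  · intro h
    exact le_trans (rho_spec hG (le_trans h1 h)) (hG.anti h1 h rho_le_n)

theorem rho_one (hG : GoodJW lam n) : rhoJW lam n 1 = n :=
  le_antisymm rho_le_n (le_rho le_rfl hG.hpos)

theorem rho_anti (hG : GoodJW lam n) {d d' : ℕ} (h : d ≤ d') : rhoJW lam n d' ≤ rhoJW lam n d := by
  rcases Nat.eq_zero_or_pos (rhoJW lam n d') with h0 | h0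
  · omega
  · exact le_rho rho_le_n (le_trans h (rho_spec hG h0))

theorem rho_pos (hG : GoodJW lam n) {d : ℕ} (h : d ≤ lam 1) : 1 ≤ rhoJW lam n d :=
  le_rho hG.hn h

theorem rho_zero (hG : GoodJW lam n) {d : ℕ} (h : lam 1 < d) : rhoJW lam n d = 0 := by
  by_contra h0
  have h1 : 1 ≤ rhoJW lam n d := by omega
  exact absurd (le_trans (rho_spec hG h1) (hG.le_m h1 rho_le_n)) (by omega)

theorem rho_succ_le (hG : GoodJW lam n) {d : ℕ} (hd : 1 ≤ d) :
    rhoJW lam n d ≤ rhoJW lam n (d + 1) + 1 := by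
  by_contra hcon
  set t := rhoJW lam n (d + 1)
  have h1 : t + 1 ≤ rhoJW lam n d := by omega
  have h2 : t + 2 ≤ rhoJW lam n d := by omega
  have hn1 : t + 1 ≤ n := le_trans h1 rho_le_n
  have hn2 : t + 2 ≤ n := le_trans h2 rho_le_n
  have ha : d ≤ lam (t + 1) := (mem_rho hG (by omega) hn1).2 h1
  have hb : d ≤ lam (t + 2) := (mem_rho hG (by omega) hn2).2 h2
  have ha' : lam (t + 1) < d + 1 := rho_lt hG (by omega) hn1
  have hb' : lam (t + 2) < d + 1 := rho_lt hG (by omega) hn2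
  have := hG.hstrict (t + 1) (t + 2) (by omega) (by omega) hn2
  omega

theorem rho_diff (hG : GoodJW lam n) {j : ℕ} (hj : 1 ≤ j) :
    rhoJW lam n j = rhoJW lam n (j + 1) +
      (if ∃ k, 1 ≤ k ∧ k ≤ n ∧ lam k = j then 1 else 0) := by
  have h1 := rho_anti hG (by omega : j ≤ j + 1)
  have h2 := rho_succ_le hG hj
  split_ifs with h
  · obtain ⟨k, hk1, hk2, hk3⟩ := h
    have hkr : k ≤ rhoJW lam n j := le_rho hk2 (by omega)
    have hkr' : rhoJW lam n (j + 1) < k := by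
      by_contra hc
      have := (mem_rho hG hk1 hk2).2 (by omega : k ≤ rhoJW lam n (j+1))
      omega
    omega
  · push_neg at h
    by_contra hc
    set k := rhoJW lam n j
    have hk1 : 1 ≤ k := by omega
    have hk2 : k ≤ n := rho_le_n
    have ha : j ≤ lam k := rho_spec hG hk1
    have hb : lam k < j + 1 := rho_lt hG (by omega) hk2
    exact absurd (by omega : lam k = j) (h k hk1 hk2)

theorem mem_sBoxes_iff (hG : GoodJW lam n) {p : ℕ × ℕ} :
    p ∈ sBoxes lam n ↔ 1 ≤ p.1 ∧ p.1 ≤ n ∧ p.1 ≤ p.2 ∧ p.2 < p.1 + lam p.1 := by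
  unfold sBoxes
  simp only [Finset.mem_filter, Finset.mem_product, Finset.mem_Icc]
  constructor
  · rintro ⟨⟨⟨a, b⟩, c, d⟩, e, f⟩; exact ⟨a, b, e, f⟩
  · rintro ⟨a, b, e, f⟩
    have := hG.le_m a b
    exact ⟨⟨⟨a, b⟩, by omega, by omega⟩, e, f⟩

/-- The box on diagonal `d`, row `r`. -/
def bxp (r d : ℕ) : ℕ × ℕ := (r, r + d - 1)

theorem bxp_mem (hG : GoodJW lam n) {r d : ℕ} (h1 : 1 ≤ r) (h2 : r ≤ n) (h3 : 1 ≤ d)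
    (h4 : d ≤ lam r) : bxp r d ∈ sBoxes lam n := by
  rw [mem_sBoxes_iff hG]
  dsimp only [bxp]
  refine ⟨h1, h2, by omega, by omega⟩

theorem col_upward (hG : GoodJW lam n) {r c : ℕ} (h : ((r + 1 : ℕ), c) ∈ sBoxes lam n)
    (h1 : 1 ≤ r) : ((r : ℕ), c) ∈ sBoxes lam n := by
  rw [mem_sBoxes_iff hG] at h ⊢
  dsimp only at h ⊢
  obtain ⟨a, b, e, f⟩ := h
  have := hG.hstrict r (r + 1) h1 (by omega) b
  exact ⟨h1, by omega, by omega, by omega⟩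

end AuxJW

section AuxJW2

variable {lam : ℕ → ℕ} {n : ℕ}

/-- Entry (plus one) of the box on diagonal `d`, row `r` of a shifted tableau. -/
def dent (lam : ℕ → ℕ) (n : ℕ) (S : sBoxes lam n → Fin n) (d r : ℕ) : ℕ :=
  if h : bxp r d ∈ sBoxes lam n then (S ⟨_, h⟩).1 + 1 else 0

theorem dent_eq (S : sBoxes lam n → Fin n) {r d : ℕ} (h : bxp r d ∈ sBoxes lam n) :
    dent lam n S d r = (S ⟨_, h⟩).1 + 1 := dif_pos h

theorem dent_le_n (hG : GoodJW lam n) (S : sBoxes lam n → Fin n) {r d : ℕ} (h1 : 1 ≤ r)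
    (h2 : 1 ≤ d) (h3 : r ≤ rhoJW lam n d) : 1 ≤ dent lam n S d r ∧ dent lam n S d r ≤ n := by
  have hrn : r ≤ n := le_trans h3 rho_le_n
  have hm : bxp r d ∈ sBoxes lam n := bxp_mem hG h1 hrn h2 ((mem_rho hG h1 hrn).2 h3)
  rw [dent_eq S hm]
  have := (S ⟨_, hm⟩).2
  omega

theorem dent_step (hG : GoodJW lam n) {S : sBoxes lam n → Fin n} (hSt : IsSt lam n S)
    {r d : ℕ} (h1 : 1 ≤ r) (h2 : 1 ≤ d) (h3 : r + 1 ≤ rhoJW lam n d) :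
    dent lam n S d r < dent lam n S d (r + 1) := by
  have hrn : r + 1 ≤ n := le_trans h3 rho_le_n
  have hmr : r + 1 ≤ rhoJW lam n d := h3
  have hb' : bxp (r + 1) d ∈ sBoxes lam n :=
    bxp_mem hG (by omega) hrn h2 ((mem_rho hG (by omega) hrn).2 hmr)
  have hb : bxp r d ∈ sBoxes lam n :=
    bxp_mem hG h1 (by omega) h2 ((mem_rho hG h1 (by omega)).2 (by omega))
  rw [dent_eq S hb, dent_eq S hb']
  have := hSt.2.2 ⟨_, hb⟩ ⟨_, hb'⟩ (by dsimp [bxp]) (by dsimp [bxp]; omega)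
  exact Nat.succ_lt_succ this

theorem dent_strict (hG : GoodJW lam n) {S : sBoxes lam n → Fin n} (hSt : IsSt lam n S)
    {r r' d : ℕ} (h1 : 1 ≤ r) (h2 : 1 ≤ d) (h : r < r') (h3 : r' ≤ rhoJW lam n d) :
    dent lam n S d r < dent lam n S d r' := by
  induction r' with
  | zero => omega
  | succ k ih =>
    rcases Nat.lt_or_ge r k with hlt | hge
    · exact lt_trans (ih hlt (by omega)) (dent_step hG hSt (by omega) h2 h3)
    · have : r = k := by omega
      subst this
      exact dent_step hG hSt h1 h2 h3

theorem dent_mono (hG : GoodJW lam n) {S : sBoxes lam n → Fin n} (hSt : IsSt lam n S)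
    {r r' d : ℕ} (h1 : 1 ≤ r) (h2 : 1 ≤ d) (h : r ≤ r') (h3 : r' ≤ rhoJW lam n d) :
    dent lam n S d r ≤ dent lam n S d r' := by
  rcases eq_or_lt_of_le h with rfl | hlt
  · exact le_rfl
  · exact (dent_strict hG hSt h1 h2 hlt h3).le

theorem dent_lb (hG : GoodJW lam n) {S : sBoxes lam n → Fin n} (hSt : IsSt lam n S)
    {r d : ℕ} (h1 : 1 ≤ r) (h2 : 1 ≤ d) (h3 : r ≤ rhoJW lam n d) : r ≤ dent lam n S d r := by
  induction r with
  | zero => omega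
  | succ k ih =>
    rcases Nat.eq_zero_or_pos k with rfl | hk
    · exact (dent_le_n hG S h1 h2 h3).1
    · have := ih (by omega) (by omega)
      have := dent_step hG hSt (by omega) h2 h3
      omega

theorem dent_ub (hG : GoodJW lam n) {S : sBoxes lam n → Fin n} (hSt : IsSt lam n S)
    {r d : ℕ} (h1 : 1 ≤ r) (h2 : 1 ≤ d) (h3 : r ≤ rhoJW lam n d) :
    dent lam n S d r + (rhoJW lam n d - r) ≤ n := by
  set k := rhoJW lam n d - r with hk
  clear_value k
  induction k generalizing r with
  | zero =>
    have := dent_le_n hG S h1 h2 h3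
    omega
  | succ t ih =>
    have hstep := dent_step hG hSt h1 h2 (by omega)
    have := ih (r := r + 1) (by omega) (by omega) (by omega)
    omega

theorem dent_row (hG : GoodJW lam n) {S : sBoxes lam n → Fin n} (hSt : IsSt lam n S)
    {r d : ℕ} (h1 : 1 ≤ r) (h2 : 1 ≤ d) (h3 : r ≤ rhoJW lam n (d + 1)) :
    dent lam n S d r ≤ dent lam n S (d + 1) r := by
  have hrn : r ≤ n := le_trans h3 rho_le_n
  have hb' : bxp r (d + 1) ∈ sBoxes lam n :=
    bxp_mem hG h1 hrn (by omega) ((mem_rho hG h1 hrn).2 h3)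
  have hb : bxp r d ∈ sBoxes lam n := by
    have : d + 1 ≤ lam r := (mem_rho hG h1 hrn).2 h3
    exact bxp_mem hG h1 hrn h2 (by omega)
  rw [dent_eq S hb, dent_eq S hb']
  have := hSt.1 ⟨_, hb⟩ ⟨_, hb'⟩ (by dsimp [bxp]) (by dsimp [bxp]; omega)
  exact Nat.succ_le_succ this

theorem dent_col (hG : GoodJW lam n) {S : sBoxes lam n → Fin n} (hSt : IsSt lam n S)
    {r d : ℕ} (h1 : 1 ≤ r) (h2 : 1 ≤ d) (h3 : r ≤ rhoJW lam n (d + 1))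
    (h4 : r + 1 ≤ rhoJW lam n d) :
    dent lam n S (d + 1) r ≤ dent lam n S d (r + 1) := by
  have hrn : r + 1 ≤ n := le_trans h4 rho_le_n
  have hb : bxp r (d + 1) ∈ sBoxes lam n :=
    bxp_mem hG h1 (by omega) (by omega) ((mem_rho hG h1 (by omega)).2 h3)
  have hb' : bxp (r + 1) d ∈ sBoxes lam n :=
    bxp_mem hG (by omega) hrn h2 ((mem_rho hG (by omega) hrn).2 h4)
  rw [dent_eq S hb, dent_eq S hb']
  have := hSt.2.1 ⟨_, hb⟩ ⟨_, hb'⟩ (by dsimp [bxp]; omega) (by dsimp [bxp]; omega)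
  exact Nat.succ_le_succ this

theorem dent_one (hG : GoodJW lam n) {S : sBoxes lam n → Fin n} (hSt : IsSt lam n S)
    {r : ℕ} (h1 : 1 ≤ r) (h2 : r ≤ n) : dent lam n S 1 r = r := by
  have hr : r ≤ rhoJW lam n 1 := by rw [rho_one hG]; exact h2
  have ha := dent_lb hG hSt h1 le_rfl hr
  have hb := dent_ub hG hSt h1 le_rfl hr
  rw [rho_one hG] at hb
  omega

theorem not_diagHas_of_gt (hG : GoodJW lam n) (S : sBoxes lam n → Fin n) {d i : ℕ}
    (h : lam 1 < d) : ¬ DiagHas lam n S d i := by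
  rintro ⟨b, hb1, hb2⟩
  have hm := (mem_sBoxes_iff hG).1 b.2
  have := hG.le_m hm.1 hm.2.1
  omega

theorem diagHas_iff (hG : GoodJW lam n) (S : sBoxes lam n → Fin n) {d i : ℕ} (hd : 1 ≤ d) :
    DiagHas lam n S d i ↔ ∃ r, 1 ≤ r ∧ r ≤ rhoJW lam n d ∧ dent lam n S d r = i := by
  constructor
  · rintro ⟨b, hb1, hb2⟩
    have hm := (mem_sBoxes_iff hG).1 b.2
    refine ⟨b.1.1, hm.1, ?_, ?_⟩
    · exact le_rho hm.2.1 (by omega)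
    · have hbx : bxp b.1.1 d = b.1 := by
        dsimp [bxp]; rcases b with ⟨⟨br, bc⟩, hb⟩; dsimp at *; congr 1; omega
      have hmem : bxp b.1.1 d ∈ sBoxes lam n := by rw [hbx]; exact b.2
      rw [dent_eq S hmem]
      have : (⟨bxp b.1.1 d, hmem⟩ : sBoxes lam n) = b := by
        apply Subtype.ext; exact hbx
      rw [this]
      exact hb2
  · rintro ⟨r, hr1, hr2, hr3⟩
    have hrn : r ≤ n := le_trans hr2 rho_le_n
    have hmem : bxp r d ∈ sBoxes lam n := bxp_mem hG hr1 hrn hd ((mem_rho hG hr1 hrn).2 hr2)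
    refine ⟨⟨_, hmem⟩, by dsimp [bxp]; omega, ?_⟩
    rw [dent_eq S hmem] at hr3
    exact hr3

theorem diagHas_bounds (S : sBoxes lam n → Fin n) {d i : ℕ} (h : DiagHas lam n S d i) :
    1 ≤ i ∧ i ≤ n := by
  obtain ⟨b, _, hb2⟩ := h
  have := (S b).2
  omega

end AuxJW2

section AuxJW3

variable {lam : ℕ → ℕ} {n : ℕ}

/-- Number of entries `≤ i` on diagonal `d`. -/
def NScnt (lam : ℕ → ℕ) (n : ℕ) (S : sBoxes lam n → Fin n) (d i : ℕ) : ℕ :=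
  ((Finset.Icc 1 i).filter (fun i' => DiagHas lam n S d i')).card

theorem NScnt_zero (S : sBoxes lam n → Fin n) (d : ℕ) : NScnt lam n S d 0 = 0 := by
  simp [NScnt]

theorem NScnt_mono (S : sBoxes lam n → Fin n) (d : ℕ) {i i' : ℕ} (h : i ≤ i') :
    NScnt lam n S d i ≤ NScnt lam n S d i' :=
  Finset.card_le_card (Finset.filter_subset_filter _ (Finset.Icc_subset_Icc_right h))

theorem NScnt_succ (S : sBoxes lam n → Fin n) (d i : ℕ) :
    NScnt lam n S d (i + 1) =
      NScnt lam n S d i + (if DiagHas lam n S d (i + 1) then 1 else 0) := by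
  unfold NScnt
  have h : Finset.Icc 1 (i + 1) = insert (i + 1) (Finset.Icc 1 i) := by
    ext x; simp [Finset.mem_Icc, Finset.mem_insert]; omega
  rw [h, Finset.filter_insert]
  split_ifs with hd
  · rw [Finset.card_insert_of_notMem (by simp [Finset.mem_filter])]
  · rfl

theorem NScnt_eq (hG : GoodJW lam n) {S : sBoxes lam n → Fin n} (hSt : IsSt lam n S)
    {d : ℕ} (hd : 1 ≤ d) (i : ℕ) :
    NScnt lam n S d i =
      ((Finset.Icc 1 (rhoJW lam n d)).filter (fun r => dent lam n S d r ≤ i)).card := by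
  unfold NScnt
  have himg : (Finset.Icc 1 i).filter (fun i' => DiagHas lam n S d i') =
      ((Finset.Icc 1 (rhoJW lam n d)).filter (fun r => dent lam n S d r ≤ i)).image
        (dent lam n S d) := by
    ext x
    simp only [Finset.mem_filter, Finset.mem_Icc, Finset.mem_image]
    constructor
    · rintro ⟨⟨hx1, hx2⟩, hD⟩
      obtain ⟨r, hr1, hr2, hr3⟩ := (diagHas_iff hG S hd).1 hD
      exact ⟨r, ⟨⟨hr1, hr2⟩, by omega⟩, hr3⟩
    · rintro ⟨r, ⟨⟨hr1, hr2⟩, hle⟩, hx⟩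
      have hlb := dent_lb hG hSt hr1 hd hr2
      refine ⟨⟨by omega, by omega⟩, (diagHas_iff hG S hd).2 ⟨r, hr1, hr2, hx⟩⟩
  rw [himg]
  apply Finset.card_image_of_injOn
  intro a ha b hb hab
  simp only [Finset.mem_coe, Finset.mem_filter, Finset.mem_Icc] at ha hb
  by_contra hne
  rcases Nat.lt_or_ge a b with h | h
  · exact absurd hab (Nat.ne_of_lt (dent_strict hG hSt ha.1.1 hd h hb.1.2))
  · have : b < a := by omega
    exact absurd hab.symm (Nat.ne_of_lt (dent_strict hG hSt hb.1.1 hd this ha.1.2))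

theorem NScnt_top (hG : GoodJW lam n) {S : sBoxes lam n → Fin n} (hSt : IsSt lam n S)
    {d : ℕ} (hd : 1 ≤ d) : NScnt lam n S d n = rhoJW lam n d := by
  rw [NScnt_eq hG hSt hd]
  rw [Finset.filter_true_of_mem, Nat.card_Icc]
  · omega
  · intro r hr
    simp only [Finset.mem_Icc] at hr
    exact (dent_le_n hG S hr.1 hd hr.2).2

theorem NScnt_pair (hG : GoodJW lam n) {S : sBoxes lam n → Fin n} (hSt : IsSt lam n S)
    {d : ℕ} (hd : 1 ≤ d) (i : ℕ) :
    NScnt lam n S (d + 1) i ≤ NScnt lam n S d i ∧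
      NScnt lam n S d i ≤ NScnt lam n S (d + 1) i + 1 := by
  rw [NScnt_eq hG hSt hd, NScnt_eq hG hSt (by omega : 1 ≤ d + 1)]
  constructor
  · apply Finset.card_le_card
    intro r hr
    simp only [Finset.mem_filter, Finset.mem_Icc] at hr ⊢
    obtain ⟨⟨hr1, hr2⟩, hle⟩ := hr
    exact ⟨⟨hr1, le_trans hr2 (rho_anti hG (by omega))⟩,
      le_trans (dent_row hG hSt hr1 hd hr2) hle⟩
  · have hsub : (Finset.Icc 1 (rhoJW lam n d)).filter (fun r => dent lam n S d r ≤ i) ⊆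
        insert 1 (((Finset.Icc 1 (rhoJW lam n (d + 1))).filter
          (fun r => dent lam n S (d + 1) r ≤ i)).image (· + 1)) := by
      intro r hr
      simp only [Finset.mem_filter, Finset.mem_Icc] at hr
      obtain ⟨⟨hr1, hr2⟩, hle⟩ := hr
      rcases Nat.eq_or_lt_of_le hr1 with h1 | h1
      · simp [← h1]
      · apply Finset.mem_insert_of_mem
        simp only [Finset.mem_image, Finset.mem_filter, Finset.mem_Icc]
        have hsucc := rho_succ_le hG hd
        refine ⟨r - 1, ⟨⟨by omega, by omega⟩, ?_⟩, by omega⟩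
        have : r - 1 + 1 = r := by omega
        calc dent lam n S (d + 1) (r - 1) ≤ dent lam n S d (r - 1 + 1) :=
              dent_col hG hSt (by omega) hd (by omega) (by omega)
          _ ≤ i := by rw [this]; exact hle
    calc _ ≤ _ := Finset.card_le_card hsub
      _ ≤ _ + 1 := by
          rw [Nat.add_comm]
          apply le_trans (Finset.card_insert_le _ _)
          simp [Finset.card_image_le]

/-- Indicator of `DiagHas`. -/
def chiS (lam : ℕ → ℕ) (n : ℕ) (S : sBoxes lam n → Fin n) (d i : ℕ) : ℤ :=
  if DiagHas lam n S d i then 1 else 0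

theorem chiS_mem (S : sBoxes lam n → Fin n) (d i : ℕ) :
    chiS lam n S d i = 0 ∨ chiS lam n S d i = 1 := by
  unfold chiS; split_ifs <;> simp

theorem NScnt_sub (S : sBoxes lam n → Fin n) (d : ℕ) {i : ℕ} (hi : 1 ≤ i) :
    (NScnt lam n S d i : ℤ) - NScnt lam n S d (i - 1) = chiS lam n S d i := by
  have h : i - 1 + 1 = i := by omega
  have := NScnt_succ S d (i - 1)
  rw [h] at this
  rw [this]
  unfold chiS
  split_ifs <;> push_cast <;> ring

theorem asmOf_eq (hG : GoodJW lam n) (S : sBoxes lam n → Fin n) {i j : ℕ}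
    (hi1 : 1 ≤ i) (hi2 : i ≤ n) (hj1 : 1 ≤ j) (hj2 : j ≤ lam 1) :
    asmOf lam n (lam 1) S i j = chiS lam n S j i - chiS lam n S (j + 1) i := by
  unfold asmOf chiS
  rw [if_pos ⟨hi1, hi2, hj1, hj2⟩]
  rcases Nat.lt_or_ge j (lam 1) with hlt | hge
  · by_cases h1 : DiagHas lam n S j i <;> by_cases h2 : DiagHas lam n S (j + 1) i <;>
      simp [h1, h2, hlt, Nat.ne_of_lt hlt]
  · have hm : j = lam 1 := by omega
    subst hm
    have hnot : ¬ DiagHas lam n S (lam 1 + 1) i := not_diagHas_of_gt hG S (by omega)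
    by_cases h : DiagHas lam n S (lam 1) i <;> simp [h, hnot, lt_irrefl]

theorem sum_tele (f : ℕ → ℤ) (a b : ℕ) (h : a ≤ b + 1) :
    ∑ k ∈ Finset.Icc a b, (f k - f (k + 1)) = f a - f (b + 1) := by
  induction b with
  | zero =>
    rcases Nat.le_one_iff_eq_zero_or_eq_one.1 h with rfl | rfl
    · simp
    · rw [Finset.Icc_eq_empty (by omega)]; simp
  | succ t ih =>
    rcases Nat.eq_or_lt_of_le h with h' | h'
    · subst h'
      rw [Finset.Icc_eq_empty (by omega)]; simp
    · rw [Finset.sum_Icc_succ_top (by omega : a ≤ t + 1), ih (by omega)]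
      ring

theorem tele_const (g : ℕ → ℤ) (k0 k1 : ℕ) (hconst : ∀ k, k0 ≤ k → k < k1 → g k = g (k + 1)) :
    ∀ t, k0 ≤ t → t ≤ k1 → g k0 = g t := by
  intro t
  induction t with
  | zero => intro h _; interval_cases k0; rfl
  | succ s ih =>
    intro h1 h2
    rcases Nat.eq_or_lt_of_le h1 with h' | h'
    · rw [h']
    · rw [ih (by omega) (by omega)]
      exact hconst s (by omega) (by omega)

theorem alt_helper {f g : ℕ → ℤ} {lo hi : ℕ}
    (hg : ∀ k, g k = 0 ∨ g k = 1)
    (hfg : ∀ k, lo ≤ k → k ≤ hi → f k = g k - g (k + 1))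
    (hout : ∀ k, ¬(lo ≤ k ∧ k ≤ hi) → f k = 0) :
    ∀ k k', k < k' → f k ≠ 0 → f k' ≠ 0 →
      (∀ k'', k < k'' → k'' < k' → f k'' = 0) → f k' = -f k := by
  intro k k' hkk hfk hfk' hmid
  have hk : lo ≤ k ∧ k ≤ hi := by by_contra h; exact hfk (hout k h)
  have hk' : lo ≤ k' ∧ k' ≤ hi := by by_contra h; exact hfk' (hout k' h)
  have hconst : g (k + 1) = g k' := by
    apply tele_const g (k + 1) k' _ k' (by omega) le_rfl
    intro t ht1 ht2
    have hft : f t = 0 := hmid t (by omega) (by omega)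
    have := hfg t (by omega) (by omega)
    omega
  have e1 := hfg k hk.1 hk.2
  have e2 := hfg k' hk'.1 hk'.2
  have := hg k; have := hg (k + 1); have := hg k'; have := hg (k' + 1)
  omega

theorem last_helper {f g : ℕ → ℤ} {lo hi : ℕ}
    (hg : ∀ k, g k = 0 ∨ g k = 1)
    (hfg : ∀ k, lo ≤ k → k ≤ hi → f k = g k - g (k + 1))
    (hout : ∀ k, ¬(lo ≤ k ∧ k ≤ hi) → f k = 0)
    (htop : g (hi + 1) = 0) :
    ∀ k, f k ≠ 0 → (∀ k', k < k' → f k' = 0) → f k = 1 := by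
  intro k hfk hafter
  have hk : lo ≤ k ∧ k ≤ hi := by by_contra h; exact hfk (hout k h)
  have hconst : g (k + 1) = g (hi + 1) := by
    apply tele_const g (k + 1) (hi + 1) _ (hi + 1) (by omega) le_rfl
    intro t ht1 ht2
    have hft : f t = 0 := hafter t (by omega)
    have := hfg t (by omega) (by omega)
    omega
  have e1 := hfg k hk.1 hk.2
  have := hg k; have := hg (k + 1)
  omega

theorem alt_helper' {f g : ℕ → ℤ} {lo hi : ℕ}
    (hg : ∀ k, g k = 0 ∨ g k = 1)
    (hfg : ∀ k, lo ≤ k → k ≤ hi → f k = g k - g (k - 1))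
    (hout : ∀ k, ¬(lo ≤ k ∧ k ≤ hi) → f k = 0) :
    ∀ k k', k < k' → f k ≠ 0 → f k' ≠ 0 →
      (∀ k'', k < k'' → k'' < k' → f k'' = 0) → f k' = -f k := by
  intro k k' hkk hfk hfk' hmid
  have hk : lo ≤ k ∧ k ≤ hi := by by_contra h; exact hfk (hout k h)
  have hk' : lo ≤ k' ∧ k' ≤ hi := by by_contra h; exact hfk' (hout k' h)
  have hconst : g k = g (k' - 1) := by
    apply tele_const g k (k' - 1) _ (k' - 1) (by omega) le_rfl
    intro t ht1 ht2
    have hft : f (t + 1) = 0 := hmid (t + 1) (by omega) (by omega)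
    have := hfg (t + 1) (by omega) (by omega)
    simp only [Nat.add_sub_cancel] at this
    omega
  have e1 := hfg k hk.1 hk.2
  have e2 := hfg k' hk'.1 hk'.2
  have := hg k; have := hg (k - 1); have := hg k'; have := hg (k' - 1)
  omega

theorem first_helper {f g : ℕ → ℤ} {lo hi : ℕ}
    (hg : ∀ k, g k = 0 ∨ g k = 1)
    (hfg : ∀ k, lo ≤ k → k ≤ hi → f k = g k - g (k - 1))
    (hout : ∀ k, ¬(lo ≤ k ∧ k ≤ hi) → f k = 0)
    (hbot : g (lo - 1) = 0) :
    ∀ k, f k ≠ 0 → (∀ k', k' < k → f k' = 0) → f k = 1 := by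
  intro k hfk hbefore
  have hk : lo ≤ k ∧ k ≤ hi := by by_contra h; exact hfk (hout k h)
  have hconst : g (lo - 1) = g (k - 1) := by
    apply tele_const g (lo - 1) (k - 1) _ (k - 1) (by omega) le_rfl
    intro t ht1 ht2
    have hft : f (t + 1) = 0 := hbefore (t + 1) (by omega)
    have := hfg (t + 1) (by omega) (by omega)
    simp only [Nat.add_sub_cancel] at this
    omega
  have e1 := hfg k hk.1 hk.2
  have := hg k
  omega

end AuxJW3

section AuxJW4

variable {lam : ℕ → ℕ} {n : ℕ}

theorem sum_chiS (S : sBoxes lam n → Fin n) (d i : ℕ) :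
    ∑ i' ∈ Finset.Icc 1 i, chiS lam n S d i' = (NScnt lam n S d i : ℤ) := by
  unfold chiS NScnt
  rw [Finset.sum_boole]

theorem asmOf_out (lam : ℕ → ℕ) (n m : ℕ) (S : sBoxes lam n → Fin n) {i j : ℕ}
    (h : ¬(1 ≤ i ∧ i ≤ n ∧ 1 ≤ j ∧ j ≤ m)) : asmOf lam n m S i j = 0 := by
  simp only [asmOf]
  rw [if_neg h]

theorem chiS_one (hG : GoodJW lam n) {S : sBoxes lam n → Fin n} (hSt : IsSt lam n S)
    {i : ℕ} (hi1 : 1 ≤ i) (hi2 : i ≤ n) : chiS lam n S 1 i = 1 := by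
  unfold chiS
  rw [if_pos]
  refine (diagHas_iff hG S le_rfl).2 ⟨i, hi1, ?_, dent_one hG hSt hi1 hi2⟩
  rw [rho_one hG]; exact hi2

theorem chiS_top (hG : GoodJW lam n) (S : sBoxes lam n → Fin n) {d i : ℕ} (h : lam 1 < d) :
    chiS lam n S d i = 0 := by
  unfold chiS
  rw [if_neg (not_diagHas_of_gt hG S h)]

theorem mapsTo_asm (hG : GoodJW lam n) {S : sBoxes lam n → Fin n} (hSt : IsSt lam n S) :
    IsAsm lam n (lam 1) (asmOf lam n (lam 1) S) := by
  set m := lam 1 with hm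
  set A := asmOf lam n m S with hA
  have hout : ∀ i j, ¬(1 ≤ i ∧ i ≤ n ∧ 1 ≤ j ∧ j ≤ m) → A i j = 0 :=
    fun i j h => asmOf_out lam n m S h
  have heq : ∀ i j, 1 ≤ i → i ≤ n → 1 ≤ j → j ≤ m →
      A i j = chiS lam n S j i - chiS lam n S (j + 1) i :=
    fun i j a b c d => asmOf_eq hG S a b c d
  refine ⟨hout, ?_, ?_, ?_, ?_, ?_, ?_, ?_⟩
  · -- values
    intro i j
    by_cases h : 1 ≤ i ∧ i ≤ n ∧ 1 ≤ j ∧ j ≤ m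
    · rw [heq i j h.1 h.2.1 h.2.2.1 h.2.2.2]
      rcases chiS_mem (lam := lam) (n := n) S j i with h1 | h1 <;>
        rcases chiS_mem (lam := lam) (n := n) S (j + 1) i with h2 | h2 <;>
        rw [h1, h2] <;> norm_num
    · rw [hout i j h]; norm_num
  · -- row alternation
    intro i j j' hlt hj hj' hmid
    have hi : 1 ≤ i ∧ i ≤ n := by
      by_contra h
      exact hj (hout i j (by tauto))
    exact alt_helper (f := fun k => A i k) (g := fun k => chiS lam n S k i) (lo := 1) (hi := m)
      (fun k => chiS_mem S k i)
      (fun k h1 h2 => heq i k hi.1 hi.2 h1 h2)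
      (fun k hk => hout i k (by tauto))
      j j' hlt hj hj' hmid
  · -- column alternation
    intro i i' j hlt hi hi' hmid
    have hj : 1 ≤ j ∧ j ≤ m := by
      by_contra h
      exact hi (hout i j (by tauto))
    refine alt_helper' (f := fun k => A k j)
      (g := fun k => (NScnt lam n S j k : ℤ) - NScnt lam n S (j + 1) k) (lo := 1) (hi := n)
      ?_ ?_ (fun k hk => hout k j (by tauto)) i i' hlt hi hi' hmid
    · intro k
      have := NScnt_pair hG hSt hj.1 k
      omega
    · intro k h1 h2
      rw [heq k j h1 h2 hj.1 hj.2]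
      have a1 := NScnt_sub S j (i := k) h1
      have a2 := NScnt_sub S (j + 1) (i := k) h1
      omega
  · -- rightmost is 1
    intro i j hj hafter
    have hi : 1 ≤ i ∧ i ≤ n := by
      by_contra h
      exact hj (hout i j (by tauto))
    exact last_helper (f := fun k => A i k) (g := fun k => chiS lam n S k i) (lo := 1) (hi := m)
      (fun k => chiS_mem S k i)
      (fun k h1 h2 => heq i k hi.1 hi.2 h1 h2)
      (fun k hk => hout i k (by tauto))
      (chiS_top hG S (by omega))
      j hj hafter
  · -- topmost is 1
    intro i j hj hbefore
    have hij : 1 ≤ j ∧ j ≤ m := by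
      by_contra h
      exact hj (hout i j (by tauto))
    refine first_helper (f := fun k => A k j)
      (g := fun k => (NScnt lam n S j k : ℤ) - NScnt lam n S (j + 1) k) (lo := 1) (hi := n)
      ?_ ?_ (fun k hk => hout k j (by tauto)) ?_ i hj hbefore
    · intro k
      have := NScnt_pair hG hSt hij.1 k
      omega
    · intro k h1 h2
      rw [heq k j h1 h2 hij.1 hij.2]
      have a1 := NScnt_sub S j (i := k) h1
      have a2 := NScnt_sub S (j + 1) (i := k) h1
      omega
    · simp [NScnt_zero]
  · -- row sums
    intro i h1 h2
    have : ∑ j ∈ Finset.Icc 1 m, A i j =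
        ∑ j ∈ Finset.Icc 1 m, (chiS lam n S j i - chiS lam n S (j + 1) i) := by
      apply Finset.sum_congr rfl
      intro j hj
      simp only [Finset.mem_Icc] at hj
      exact heq i j h1 h2 hj.1 hj.2
    rw [this, sum_tele (fun j => chiS lam n S j i) 1 m (by omega),
      chiS_one hG hSt h1 h2, chiS_top hG S (by omega)]
    ring
  · -- column sums
    intro j h1 h2
    have : ∑ i ∈ Finset.Icc 1 n, A i j =
        ∑ i ∈ Finset.Icc 1 n, (chiS lam n S j i - chiS lam n S (j + 1) i) := by
      apply Finset.sum_congr rfl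
      intro i hi
      simp only [Finset.mem_Icc] at hi
      exact heq i j hi.1 hi.2 h1 h2
    rw [this, Finset.sum_sub_distrib, sum_chiS, sum_chiS,
      NScnt_top hG hSt h1, NScnt_top hG hSt (by omega : 1 ≤ j + 1)]
    have hd := rho_diff hG h1
    split_ifs with h
    · simp only [if_pos h] at hd
      omega
    · simp only [if_neg h] at hd
      omega

end AuxJW4

section AuxJW5

variable {lam : ℕ → ℕ} {n : ℕ}

theorem not_diagHas_zero (S : sBoxes lam n → Fin n) {i : ℕ} (hG : GoodJW lam n) :
    ¬ DiagHas lam n S 0 i := by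
  rintro ⟨b, hb1, _⟩
  have := ((mem_sBoxes_iff hG).1 b.2).2.2.1
  omega

theorem chi_eq_sum (hG : GoodJW lam n) (S : sBoxes lam n → Fin n) {i j : ℕ}
    (hi1 : 1 ≤ i) (hi2 : i ≤ n) (hj1 : 1 ≤ j) :
    chiS lam n S j i = ∑ j' ∈ Finset.Icc j (lam 1), asmOf lam n (lam 1) S i j' := by
  rcases Nat.lt_or_ge (lam 1) j with h | h
  · rw [chiS_top hG S h, Finset.Icc_eq_empty (by omega), Finset.sum_empty]
  · have : ∑ j' ∈ Finset.Icc j (lam 1), asmOf lam n (lam 1) S i j' =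
        ∑ j' ∈ Finset.Icc j (lam 1), (chiS lam n S j' i - chiS lam n S (j' + 1) i) := by
      apply Finset.sum_congr rfl
      intro j' hj'
      simp only [Finset.mem_Icc] at hj'
      exact asmOf_eq hG S hi1 hi2 (by omega) hj'.2
    rw [this, sum_tele (fun j' => chiS lam n S j' i) j (lam 1) (by omega),
      chiS_top hG S (by omega : lam 1 < lam 1 + 1)]
    ring

theorem dent_char (hG : GoodJW lam n) {S : sBoxes lam n → Fin n} (hSt : IsSt lam n S)
    {d r : ℕ} (hd : 1 ≤ d) (hr1 : 1 ≤ r) (hr2 : r ≤ rhoJW lam n d) :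
    r ≤ NScnt lam n S d (dent lam n S d r) ∧
      NScnt lam n S d (dent lam n S d r - 1) < r := by
  constructor
  · rw [NScnt_eq hG hSt hd]
    calc r = (Finset.Icc 1 r).card := by rw [Nat.card_Icc]; omega
      _ ≤ _ := by
        apply Finset.card_le_card
        intro r' hr'
        simp only [Finset.mem_Icc, Finset.mem_filter] at hr' ⊢
        exact ⟨⟨hr'.1, by omega⟩, dent_mono hG hSt hr'.1 hd hr'.2 hr2⟩
  · rw [NScnt_eq hG hSt hd]
    have hpos := (dent_le_n hG S hr1 hd hr2).1
    calc _ ≤ (Finset.Icc 1 (r - 1)).card := by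
          apply Finset.card_le_card
          intro r' hr'
          simp only [Finset.mem_Icc, Finset.mem_filter] at hr' ⊢
          obtain ⟨⟨h1, h2⟩, h3⟩ := hr'
          refine ⟨h1, ?_⟩
          by_contra hc
          have : r ≤ r' := by omega
          have := dent_mono hG hSt hr1 hd this h2
          omega
      _ < r := by rw [Nat.card_Icc]; omega

theorem st_ext (hG : GoodJW lam n) {S S' : sBoxes lam n → Fin n}
    (hSt : IsSt lam n S) (hSt' : IsSt lam n S')
    (hDiag : ∀ d i, DiagHas lam n S d i ↔ DiagHas lam n S' d i) : S = S' := by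
  have hN : ∀ d i, NScnt lam n S d i = NScnt lam n S' d i := by
    intro d i
    unfold NScnt
    congr 1
    apply Finset.filter_congr
    intro x _
    exact (by simpa using hDiag d x)
  have hdent : ∀ d r, 1 ≤ d → 1 ≤ r → r ≤ rhoJW lam n d →
      dent lam n S d r = dent lam n S' d r := by
    intro d r hd hr1 hr2
    have c1 := dent_char hG hSt hd hr1 hr2
    have c2 := dent_char hG hSt' hd hr1 hr2
    rw [← hN, ← hN] at c2
    set a := dent lam n S d r
    set b := dent lam n S' d r
    by_contra hne
    rcases Nat.lt_or_ge a b with h | h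
    · have : a ≤ b - 1 := by omega
      have := NScnt_mono S d this
      omega
    · have : b < a := by omega
      have : b ≤ a - 1 := by omega
      have := NScnt_mono S d this
      omega
  funext b
  obtain ⟨⟨r, c⟩, hb⟩ := b
  have hm := (mem_sBoxes_iff hG).1 hb
  dsimp only at hm
  set d := c + 1 - r with hd
  have hd1 : 1 ≤ d := by omega
  have hdl : d ≤ lam r := by omega
  have hrrho : r ≤ rhoJW lam n d := le_rho hm.2.1 hdl
  have hbx : bxp r d = (r, c) := by dsimp [bxp]; congr 1; omega
  have hmem : bxp r d ∈ sBoxes lam n := by rw [hbx]; exact hb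
  have e1 := dent_eq S hmem
  have e2 := dent_eq S' hmem
  have := hdent d r hd1 hm.1 hrrho
  rw [e1, e2] at this
  have hval : (S ⟨bxp r d, hmem⟩).1 = (S' ⟨bxp r d, hmem⟩).1 := by omega
  have hsub : (⟨bxp r d, hmem⟩ : sBoxes lam n) = ⟨(r, c), hb⟩ := Subtype.ext hbx
  rw [hsub] at hval
  exact Fin.ext hval

theorem inj_asm (hG : GoodJW lam n) {S S' : sBoxes lam n → Fin n}
    (hSt : IsSt lam n S) (hSt' : IsSt lam n S')
    (heq : asmOf lam n (lam 1) S = asmOf lam n (lam 1) S') : S = S' := by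
  apply st_ext hG hSt hSt'
  intro d i
  rcases Nat.eq_zero_or_pos d with rfl | hd
  · simp [not_diagHas_zero S hG, not_diagHas_zero S' hG]
  rcases Nat.lt_or_ge (lam 1) d with h | h
  · simp [not_diagHas_of_gt hG S h, not_diagHas_of_gt hG S' h]
  by_cases hi : 1 ≤ i ∧ i ≤ n
  · have h1 := chi_eq_sum hG S (j := d) hi.1 hi.2 hd
    have h2 := chi_eq_sum hG S' (j := d) hi.1 hi.2 hd
    rw [heq] at h1
    have : chiS lam n S d i = chiS lam n S' d i := by rw [h1, h2]
    unfold chiS at this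
    by_cases hx : DiagHas lam n S d i <;> by_cases hy : DiagHas lam n S' d i <;>
      simp [hx, hy] at this ⊢
  · constructor <;> intro hD <;> exact absurd (diagHas_bounds _ hD) (by omega)

end AuxJW5

section AuxJW6

variable {lam : ℕ → ℕ} {n : ℕ} {m : ℕ} {A : ℕ → ℕ → ℤ}

/-- Row suffix sums of a matrix. -/
def csum (m : ℕ) (A : ℕ → ℕ → ℤ) (j i : ℕ) : ℤ := ∑ j' ∈ Finset.Icc j m, A i j'

/-- Column prefix sums of a matrix. -/
def tsumJW (A : ℕ → ℕ → ℤ) (j i : ℕ) : ℤ := ∑ i' ∈ Finset.Icc 1 i, A i' j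

theorem csum_split (hj : j ≤ m) (i : ℕ) : csum m A j i = A i j + csum m A (j + 1) i := by
  unfold csum
  rw [← Finset.Ico_add_one_right_eq_Icc, ← Finset.Ico_add_one_right_eq_Icc,
    Finset.sum_eq_sum_Ico_succ_bot (by omega : j < m + 1)]

theorem csum_empty (hj : m < j) (i : ℕ) : csum m A j i = 0 := by
  unfold csum
  rw [Finset.Icc_eq_empty (by omega), Finset.sum_empty]

theorem csum_prop {lam : ℕ → ℕ} (hA : IsAsm lam n m A) (j i : ℕ) :
    (A i j = 1 → csum m A j i = 1) ∧ (A i j = -1 → csum m A j i = 0) ∧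
      (csum m A j i = 0 ∨ csum m A j i = 1) := by
  obtain ⟨hout, hvals, hrowalt, _, hright, _, _, _⟩ := hA
  suffices H : ∀ k j, m + 1 ≤ j + k →
      ((A i j = 1 → csum m A j i = 1) ∧ (A i j = -1 → csum m A j i = 0) ∧
        (csum m A j i = 0 ∨ csum m A j i = 1)) by
    exact H (m + 1) j (by omega)
  intro k
  induction k with
  | zero =>
    intro j hj
    have hz : A i j = 0 := hout i j (by rintro ⟨_, _, _, h⟩; omega)
    have hc : csum m A j i = 0 := csum_empty (by omega) i
    exact ⟨fun h => by omega, fun h => hc, Or.inl hc⟩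
  | succ k ih =>
    intro j hj
    by_cases hk : m + 1 ≤ j + k
    · exact ih j hk
    have hjm : j ≤ m := by omega
    have hsplit : csum m A j i = A i j + csum m A (j + 1) i := csum_split hjm i
    by_cases hne : ((Finset.Ioc j m).filter (fun j' => A i j' ≠ 0)).Nonempty
    · set s := (Finset.Ioc j m).filter (fun j' => A i j' ≠ 0) with hs
      set j₀ := s.min' hne with hj₀def
      have hj₀ := Finset.mem_filter.1 (s.min'_mem hne)
      have hj₀1 := Finset.mem_Ioc.1 hj₀.1
      have hzero : ∀ t, j < t → t < j₀ → A i t = 0 := by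
        intro t h1 h2
        by_contra hz
        have : t ∈ s := Finset.mem_filter.2 ⟨Finset.mem_Ioc.2 ⟨h1, by omega⟩, hz⟩
        exact absurd (s.min'_le t this) (by omega)
      have hcc : csum m A (j + 1) i = csum m A j₀ i := by
        unfold csum
        rw [← Finset.Ico_add_one_right_eq_Icc, ← Finset.Ico_add_one_right_eq_Icc,
          ← Finset.sum_Ico_consecutive (fun x => A i x) (by omega : j + 1 ≤ j₀)
            (by omega : j₀ ≤ m + 1)]
        have hz : ∑ x ∈ Finset.Ico (j + 1) j₀, A i x = 0 :=
          Finset.sum_eq_zero fun t ht => by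
            simp only [Finset.mem_Ico] at ht
            exact hzero t (by omega) ht.2
        rw [hz] at *
        simp
      have hP := ih j₀ (by omega)
      rcases hvals i j with h1 | h1 | h1
      · have halt := hrowalt i j j₀ (by omega) (by omega) hj₀.2 hzero
        have := hP.2.1 (by omega)
        refine ⟨fun _ => by omega, fun h => by omega, Or.inr (by omega)⟩
      · exact ⟨fun h => by omega, fun h => by omega, by omega⟩
      · have halt := hrowalt i j j₀ (by omega) (by omega) hj₀.2 hzero
        have := hP.1 (by omega)
        refine ⟨fun h => by omega, fun _ => by omega, Or.inl (by omega)⟩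
    · have hzero : ∀ t, j < t → t ≤ m → A i t = 0 := by
        intro t h1 h2
        by_contra hz
        exact hne ⟨t, Finset.mem_filter.2 ⟨Finset.mem_Ioc.2 ⟨h1, h2⟩, hz⟩⟩
      have hc1 : csum m A (j + 1) i = 0 := by
        unfold csum
        exact Finset.sum_eq_zero fun t ht => by
          simp only [Finset.mem_Icc] at ht
          exact hzero t (by omega) ht.2
      have hall : ∀ j', j < j' → A i j' = 0 := by
        intro j' h'
        by_cases h2 : j' ≤ m
        · exact hzero j' h' h2
        · exact hout i j' (by rintro ⟨_, _, _, h3⟩; omega)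
      rcases hvals i j with h1 | h1 | h1
      · exact ⟨fun _ => by omega, fun h => by omega, Or.inr (by omega)⟩
      · exact ⟨fun h => by omega, fun h => by omega, Or.inl (by omega)⟩
      · have := hright i j (by omega) hall
        omega
    
theorem Icc_one_eq_Ioc (x : ℕ) : Finset.Icc 1 x = Finset.Ioc 0 x := by
  ext t; simp only [Finset.mem_Icc, Finset.mem_Ioc]; omega

theorem tsum_cons {a b : ℕ} (h : a ≤ b) (j : ℕ) :
    tsumJW A j b = tsumJW A j a + ∑ x ∈ Finset.Ioc a b, A x j := by
  unfold tsumJW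
  rw [Icc_one_eq_Ioc, Icc_one_eq_Ioc,
    ← Finset.sum_Ioc_consecutive (fun x => A x j) (Nat.zero_le a) h]

theorem tsum_prop {lam : ℕ → ℕ} (hA : IsAsm lam n m A) (j i : ℕ) :
    (A i j = 1 → tsumJW A j i = 1) ∧ (A i j = -1 → tsumJW A j i = 0) ∧
      (tsumJW A j i = 0 ∨ tsumJW A j i = 1) := by
  obtain ⟨hout, hvals, _, hcolalt, _, htop, _, _⟩ := hA
  induction i using Nat.strong_induction_on with
  | _ i ih =>
  rcases Nat.eq_zero_or_pos i with rfl | hi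
  · have hz : A 0 j = 0 := hout 0 j (by rintro ⟨h, _⟩; omega)
    have hc : tsumJW A j 0 = 0 := by
      unfold tsumJW
      rw [Finset.Icc_eq_empty (by omega), Finset.sum_empty]
    exact ⟨fun h => by omega, fun h => hc, Or.inl hc⟩
  have hsplit : tsumJW A j i = tsumJW A j (i - 1) + A i j := by
    have := tsum_cons (A := A) (by omega : i - 1 ≤ i) j
    have he : Finset.Ioc (i - 1) i = {i} := by
      ext t; simp [Finset.mem_Ioc]; omega
    rw [he, Finset.sum_singleton] at this
    exact this
  by_cases hne : ((Finset.Icc 1 (i - 1)).filter (fun i' => A i' j ≠ 0)).Nonempty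
  · set s := (Finset.Icc 1 (i - 1)).filter (fun i' => A i' j ≠ 0) with hs
    set i₀ := s.max' hne with hi₀def
    have hi₀ := Finset.mem_filter.1 (s.max'_mem hne)
    have hi₀1 := Finset.mem_Icc.1 hi₀.1
    have hzero : ∀ t, i₀ < t → t < i → A t j = 0 := by
      intro t h1 h2
      by_contra hz
      have : t ∈ s := Finset.mem_filter.2 ⟨Finset.mem_Icc.2 ⟨by omega, by omega⟩, hz⟩
      exact absurd (s.le_max' t this) (by omega)
    have hcc : tsumJW A j (i - 1) = tsumJW A j i₀ := by
      have := tsum_cons (A := A) (by omega : i₀ ≤ i - 1) j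
      have hz : ∑ x ∈ Finset.Ioc i₀ (i - 1), A x j = 0 :=
        Finset.sum_eq_zero fun t ht => by
          simp only [Finset.mem_Ioc] at ht
          exact hzero t ht.1 (by omega)
      omega
    have hP := ih i₀ (by omega)
    rcases hvals i j with h1 | h1 | h1
    · have halt := hcolalt i₀ i j (by omega) hi₀.2 (by omega) hzero
      have := hP.2.1 (by omega)
      refine ⟨fun _ => by omega, fun h => by omega, Or.inr (by omega)⟩
    · exact ⟨fun h => by omega, fun h => by omega, by omega⟩
    · have halt := hcolalt i₀ i j (by omega) hi₀.2 (by omega) hzero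
      have := hP.1 (by omega)
      refine ⟨fun h => by omega, fun _ => by omega, Or.inl (by omega)⟩
  · have hzero : ∀ t, 1 ≤ t → t ≤ i - 1 → A t j = 0 := by
      intro t h1 h2
      by_contra hz
      exact hne ⟨t, Finset.mem_filter.2 ⟨Finset.mem_Icc.2 ⟨h1, h2⟩, hz⟩⟩
    have hc1 : tsumJW A j (i - 1) = 0 := by
      unfold tsumJW
      exact Finset.sum_eq_zero fun t ht => by
        simp only [Finset.mem_Icc] at ht
        exact hzero t ht.1 ht.2
    have hall : ∀ i', i' < i → A i' j = 0 := by
      intro i' h'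
      rcases Nat.eq_zero_or_pos i' with rfl | h1
      · exact hout 0 j (by rintro ⟨h, _⟩; omega)
      · exact hzero i' h1 (by omega)
    rcases hvals i j with h1 | h1 | h1
    · exact ⟨fun _ => by omega, fun h => by omega, Or.inr (by omega)⟩
    · exact ⟨fun h => by omega, fun h => by omega, Or.inl (by omega)⟩
    · have := htop i j (by omega) hall
      omega

end AuxJW6

section AuxJW7

variable {lam : ℕ → ℕ} {n : ℕ} {m : ℕ} {A : ℕ → ℕ → ℤ}

/-- Number of `i' ≤ i` whose suffix sum at column `j` equals `1`. -/
def DcardJW (m : ℕ) (A : ℕ → ℕ → ℤ) (j i : ℕ) : ℕ :=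
  ((Finset.Icc 1 i).filter (fun i' => csum m A j i' = 1)).card

theorem Dcard_zero (j : ℕ) : DcardJW m A j 0 = 0 := by simp [DcardJW]

theorem Dcard_mono (j : ℕ) {i i' : ℕ} (h : i ≤ i') : DcardJW m A j i ≤ DcardJW m A j i' :=
  Finset.card_le_card (Finset.filter_subset_filter _ (Finset.Icc_subset_Icc_right h))

theorem Dcard_succ (j i : ℕ) :
    DcardJW m A j (i + 1) = DcardJW m A j i + (if csum m A j (i + 1) = 1 then 1 else 0) := by
  unfold DcardJW
  have h : Finset.Icc 1 (i + 1) = insert (i + 1) (Finset.Icc 1 i) := by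
    ext x; simp only [Finset.mem_Icc, Finset.mem_insert]; omega
  rw [h, Finset.filter_insert]
  split_ifs with hd
  · rw [Finset.card_insert_of_notMem (by simp [Finset.mem_filter])]
  · rfl

theorem csum_out (hA : IsAsm lam n m A) {i : ℕ} (h : ¬(1 ≤ i ∧ i ≤ n)) (j : ℕ) :
    csum m A j i = 0 := by
  unfold csum
  exact Finset.sum_eq_zero fun t ht => hA.1 i t (by rintro ⟨h1, h2, _⟩; exact h ⟨h1, h2⟩)

theorem sum_csum (hA : IsAsm lam n m A) (j i : ℕ) :
    (DcardJW m A j i : ℤ) = ∑ i' ∈ Finset.Icc 1 i, csum m A j i' := by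
  have : ∑ i' ∈ Finset.Icc 1 i, csum m A j i' =
      ∑ i' ∈ Finset.Icc 1 i, (if csum m A j i' = 1 then (1 : ℤ) else 0) := by
    apply Finset.sum_congr rfl
    intro i' _
    rcases (csum_prop hA j i').2.2 with h | h <;> simp [h]
  rw [this, Finset.sum_boole]
  rfl

theorem tsum_eq_Dcard (hA : IsAsm lam n m A) {j : ℕ} (hjm : j ≤ m) (i : ℕ) :
    tsumJW A j i = (DcardJW m A j i : ℤ) - DcardJW m A (j + 1) i := by
  unfold tsumJW
  rw [sum_csum hA, sum_csum hA, ← Finset.sum_sub_distrib]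
  apply Finset.sum_congr rfl
  intro i' _
  have := csum_split (A := A) hjm i'
  omega

theorem Dcard_pair (hA : IsAsm lam n m A) {j : ℕ} (hjm : j ≤ m) (i : ℕ) :
    DcardJW m A (j + 1) i ≤ DcardJW m A j i ∧
      DcardJW m A j i ≤ DcardJW m A (j + 1) i + 1 := by
  have h1 := tsum_eq_Dcard hA hjm i
  have h2 := (tsum_prop hA j i).2.2
  omega

theorem colsum_rho (hG : GoodJW lam n) (hA : IsAsm lam n (lam 1) A) {j : ℕ}
    (hj : 1 ≤ j) (hjm : j ≤ lam 1) :
    ∑ i ∈ Finset.Icc 1 n, A i j = (rhoJW lam n j : ℤ) - rhoJW lam n (j + 1) := by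
  rw [hA.2.2.2.2.2.2.2 j hj hjm]
  have := rho_diff hG hj
  split_ifs with h
  · simp only [if_pos h] at this; omega
  · simp only [if_neg h] at this; omega

theorem Dcard_top (hG : GoodJW lam n) (hA : IsAsm lam n (lam 1) A) {j : ℕ} (hj : 1 ≤ j) :
    DcardJW (lam 1) A j n = rhoJW lam n j := by
  rcases Nat.lt_or_ge (lam 1) j with h | h
  · rw [rho_zero hG h]
    unfold DcardJW
    rw [Finset.filter_false_of_mem, Finset.card_empty]
    intro i _
    rw [csum_empty (by omega)]
    omega
  · have h1 : (DcardJW (lam 1) A j n : ℤ) = (rhoJW lam n j : ℤ) := by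
      rw [sum_csum hA]
      unfold csum
      rw [Finset.sum_comm]
      have h2 : ∀ j' ∈ Finset.Icc j (lam 1), ∑ i' ∈ Finset.Icc 1 n, A i' j' =
          (fun x => (rhoJW lam n x : ℤ)) j' - (fun x => (rhoJW lam n x : ℤ)) (j' + 1) := by
        intro j' hj'
        simp only [Finset.mem_Icc] at hj'
        exact colsum_rho hG hA (by omega) hj'.2
      rw [Finset.sum_congr rfl h2, sum_tele (fun x => (rhoJW lam n x : ℤ)) j (lam 1) (by omega),
        rho_zero hG (by omega : lam 1 < lam 1 + 1)]
      simp
    omega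

/-- The position of the `r`-th one (counting suffix sums) in column class `j`. -/
def pickJW (m : ℕ) (A : ℕ → ℕ → ℤ) (j r : ℕ) : ℕ :=
  if h : ∃ i, r ≤ DcardJW m A j i then Nat.find h else 0

theorem pick_spec (hex : ∃ i, r ≤ DcardJW m A j i) :
    r ≤ DcardJW m A j (pickJW m A j r) ∧
      ∀ i, i < pickJW m A j r → DcardJW m A j i < r := by
  unfold pickJW
  rw [dif_pos hex]
  exact ⟨Nat.find_spec hex, fun i h => by
    have := Nat.find_min hex h
    omega⟩

theorem pick_min (hex : ∃ i, r ≤ DcardJW m A j i) {i : ℕ} (h : r ≤ DcardJW m A j i) :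
    pickJW m A j r ≤ i := by
  unfold pickJW
  rw [dif_pos hex]
  exact Nat.find_min' hex h

theorem pick_ex (hG : GoodJW lam n) (hA : IsAsm lam n (lam 1) A) {j r : ℕ} (hj : 1 ≤ j)
    (hrr : r ≤ rhoJW lam n j) : ∃ i, r ≤ DcardJW (lam 1) A j i :=
  ⟨n, by rw [Dcard_top hG hA hj]; exact hrr⟩

theorem pick_facts (hG : GoodJW lam n) (hA : IsAsm lam n (lam 1) A) {j r : ℕ} (hj : 1 ≤ j)
    (hr : 1 ≤ r) (hrr : r ≤ rhoJW lam n j) :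
    DcardJW (lam 1) A j (pickJW (lam 1) A j r) = r ∧
      csum (lam 1) A j (pickJW (lam 1) A j r) = 1 ∧
      1 ≤ pickJW (lam 1) A j r ∧ pickJW (lam 1) A j r ≤ n := by
  have hex := pick_ex hG hA hj hrr
  obtain ⟨hge, hmin⟩ := pick_spec hex
  set p := pickJW (lam 1) A j r with hp
  have hp1 : 1 ≤ p := by
    by_contra h
    have h0 : p = 0 := by omega
    rw [h0, Dcard_zero] at hge
    omega
  have hlt : DcardJW (lam 1) A j (p - 1) < r := hmin (p - 1) (by omega)
  have hsucc := Dcard_succ (m := lam 1) (A := A) j (p - 1)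
  rw [(by omega : p - 1 + 1 = p)] at hsucc
  have hcs : csum (lam 1) A j p = 1 := by
    by_contra h
    rw [if_neg h] at hsucc
    omega
  rw [if_pos hcs] at hsucc
  have hpn : p ≤ n := by
    by_contra h
    have := csum_out hA (i := p) (by omega) j
    omega
  exact ⟨by omega, hcs, hp1, hpn⟩

theorem pick_strict (hG : GoodJW lam n) (hA : IsAsm lam n (lam 1) A) {j r r' : ℕ}
    (hj : 1 ≤ j) (hr : 1 ≤ r) (hlt : r < r') (hrr : r' ≤ rhoJW lam n j) :
    pickJW (lam 1) A j r < pickJW (lam 1) A j r' := by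
  have f1 := pick_facts hG hA hj hr (by omega)
  have f2 := pick_facts hG hA hj (by omega) hrr
  have hle : pickJW (lam 1) A j r ≤ pickJW (lam 1) A j r' :=
    pick_min (pick_ex hG hA hj (by omega)) (by omega)
  rcases Nat.eq_or_lt_of_le hle with h | h
  · rw [h] at f1; omega
  · exact h

theorem pick_row (hG : GoodJW lam n) (hA : IsAsm lam n (lam 1) A) {j r : ℕ}
    (hj : 1 ≤ j) (hjm : j + 1 ≤ lam 1) (hr : 1 ≤ r) (hrr : r ≤ rhoJW lam n (j + 1)) :
    pickJW (lam 1) A j r ≤ pickJW (lam 1) A (j + 1) r := by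
  have f2 := pick_facts hG hA (by omega : 1 ≤ j + 1) hr hrr
  have hpair := Dcard_pair hA (j := j) (by omega) (pickJW (lam 1) A (j + 1) r)
  exact pick_min (pick_ex hG hA hj (le_trans hrr (rho_anti hG (by omega)))) (by omega)

theorem pick_col (hG : GoodJW lam n) (hA : IsAsm lam n (lam 1) A) {j r : ℕ}
    (hj : 1 ≤ j) (hjm : j ≤ lam 1) (hr : 1 ≤ r) (hrr : r + 1 ≤ rhoJW lam n j) :
    pickJW (lam 1) A (j + 1) r ≤ pickJW (lam 1) A j (r + 1) := by
  have f1 := pick_facts hG hA hj (by omega) hrr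
  have hpair := Dcard_pair hA (j := j) hjm (pickJW (lam 1) A j (r + 1))
  have hex : ∃ i, r ≤ DcardJW (lam 1) A (j + 1) i :=
    ⟨pickJW (lam 1) A j (r + 1), by omega⟩
  exact pick_min hex (by omega)

theorem pick_row_chain (hG : GoodJW lam n) (hA : IsAsm lam n (lam 1) A) {d d' r : ℕ}
    (hd : 1 ≤ d) (hdd : d ≤ d') (hdm : d' ≤ lam 1) (hr : 1 ≤ r)
    (hrr : r ≤ rhoJW lam n d') :
    pickJW (lam 1) A d r ≤ pickJW (lam 1) A d' r := by
  induction d', hdd using Nat.le_induction with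
  | base => exact le_rfl
  | succ t ht ih =>
    have h1 : r ≤ rhoJW lam n t := le_trans hrr (rho_anti hG (by omega))
    exact le_trans (ih (by omega) h1) (pick_row hG hA (by omega) hdm hr hrr)

theorem pick_col_chain (hG : GoodJW lam n) (hA : IsAsm lam n (lam 1) A) {r r' c : ℕ}
    (h1 : 1 ≤ r) (hdd : r ≤ r') (hbox : ((r' : ℕ), c) ∈ sBoxes lam n) :
    pickJW (lam 1) A (c + 1 - r) r ≤ pickJW (lam 1) A (c + 1 - r') r' := by
  induction r', hdd using Nat.le_induction with
  | base => exact le_rfl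
  | succ t ht ih =>
    have hbox' : ((t : ℕ), c) ∈ sBoxes lam n := col_upward hG hbox (by omega)
    have hm := (mem_sBoxes_iff hG).1 hbox
    dsimp only at hm
    have hc : t < c := by omega
    have hlam : c - t ≤ lam (t + 1) := by omega
    have hjm : c - t ≤ lam 1 := le_trans hlam (hG.le_m (by omega) hm.2.1)
    have hrho : t + 1 ≤ rhoJW lam n (c - t) := le_rho hm.2.1 hlam
    have hstep : pickJW (lam 1) A (c - t + 1) t ≤ pickJW (lam 1) A (c - t) (t + 1) :=
      pick_col hG hA (by omega) hjm (by omega) hrho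
    have e1 : c + 1 - t = c - t + 1 := by omega
    have e2 : c + 1 - (t + 1) = c - t := by omega
    rw [e2]
    rw [e1] at ih
    exact le_trans (ih hbox') hstep

end AuxJW7

section AuxJW8

variable {lam : ℕ → ℕ} {n : ℕ} {A : ℕ → ℕ → ℤ}

/-- The shifted tableau attached to an alternating sign matrix. -/
def stOfJW (lam : ℕ → ℕ) (n : ℕ) (A : ℕ → ℕ → ℤ) (hG : GoodJW lam n)
    (hA : IsAsm lam n (lam 1) A) : sBoxes lam n → Fin n :=
  fun b => ⟨pickJW (lam 1) A (b.1.2 + 1 - b.1.1) b.1.1 - 1, by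
    have hm := (mem_sBoxes_iff hG).1 b.2
    have hd1 : 1 ≤ b.1.2 + 1 - b.1.1 := by omega
    have hdl : b.1.2 + 1 - b.1.1 ≤ lam b.1.1 := by omega
    have hrho : b.1.1 ≤ rhoJW lam n (b.1.2 + 1 - b.1.1) := le_rho hm.2.1 hdl
    have := pick_facts hG hA hd1 hm.1 hrho
    omega⟩

theorem stOf_val (hG : GoodJW lam n) (hA : IsAsm lam n (lam 1) A) (b : sBoxes lam n) :
    (stOfJW lam n A hG hA b).1 + 1 = pickJW (lam 1) A (b.1.2 + 1 - b.1.1) b.1.1 := by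
  have hm := (mem_sBoxes_iff hG).1 b.2
  have hd1 : 1 ≤ b.1.2 + 1 - b.1.1 := by omega
  have hdl : b.1.2 + 1 - b.1.1 ≤ lam b.1.1 := by omega
  have hrho : b.1.1 ≤ rhoJW lam n (b.1.2 + 1 - b.1.1) := le_rho hm.2.1 hdl
  have := pick_facts hG hA hd1 hm.1 hrho
  dsimp only [stOfJW]
  omega

theorem isSt_stOf (hG : GoodJW lam n) (hA : IsAsm lam n (lam 1) A) :
    IsSt lam n (stOfJW lam n A hG hA) := by
  refine ⟨?_, ?_, ?_⟩
  · intro b b' h1 h2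
    have hm := (mem_sBoxes_iff hG).1 b.2
    have hm' := (mem_sBoxes_iff hG).1 b'.2
    have v1 := stOf_val hG hA b
    have v2 := stOf_val hG hA b'
    have key : pickJW (lam 1) A (b.1.2 + 1 - b.1.1) b.1.1 ≤
        pickJW (lam 1) A (b'.1.2 + 1 - b'.1.1) b'.1.1 := by
      rw [← h1] at hm' ⊢
      rcases Nat.eq_or_lt_of_le h2 with he | hlt
      · rw [he]
      · apply pick_row_chain hG hA (by omega) (by omega)
          (le_trans (by omega : b'.1.2 + 1 - b.1.1 ≤ lam b.1.1) (hG.le_m hm.1 hm.2.1))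
          hm.1 (le_rho hm.2.1 (by omega))
    rw [Fin.le_def]
    omega
  · intro b b' h1 h2
    have hm := (mem_sBoxes_iff hG).1 b.2
    have hm' := (mem_sBoxes_iff hG).1 b'.2
    have v1 := stOf_val hG hA b
    have v2 := stOf_val hG hA b'
    have hbox : (b'.1.1, b.1.2) ∈ sBoxes lam n := by
      rw [h1]
      exact b'.2
    have key : pickJW (lam 1) A (b.1.2 + 1 - b.1.1) b.1.1 ≤
        pickJW (lam 1) A (b.1.2 + 1 - b'.1.1) b'.1.1 :=
      pick_col_chain hG hA hm.1 h2 hbox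
    rw [← h1] at v2
    rw [Fin.le_def]
    omega
  · intro b b' h1 h2
    have hm := (mem_sBoxes_iff hG).1 b.2
    have hm' := (mem_sBoxes_iff hG).1 b'.2
    have v1 := stOf_val hG hA b
    have v2 := stOf_val hG hA b'
    have hde : b'.1.2 + 1 - b'.1.1 = b.1.2 + 1 - b.1.1 := by omega
    rw [← h1] at hm'
    have key : pickJW (lam 1) A (b.1.2 + 1 - b.1.1) b.1.1 <
        pickJW (lam 1) A (b.1.2 + 1 - b.1.1) (b.1.1 + 1) := by
      apply pick_strict hG hA (by omega) hm.1 (by omega)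
      exact le_rho (by omega) (by omega : b.1.2 + 1 - b.1.1 ≤ lam (b.1.1 + 1))
    rw [hde, ← h1] at v2
    rw [Fin.lt_def]
    omega
  
theorem diagHas_stOf (hG : GoodJW lam n) (hA : IsAsm lam n (lam 1) A) {d i : ℕ}
    (hd1 : 1 ≤ d) (hdm : d ≤ lam 1) :
    DiagHas lam n (stOfJW lam n A hG hA) d i ↔ csum (lam 1) A d i = 1 := by
  constructor
  · rintro ⟨b, hb1, hb2⟩
    have hm := (mem_sBoxes_iff hG).1 b.2
    have v := stOf_val hG hA b
    have hde : b.1.2 + 1 - b.1.1 = d := by omega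
    rw [hde] at v
    have hrho : b.1.1 ≤ rhoJW lam n d := le_rho hm.2.1 (by omega)
    have := (pick_facts hG hA hd1 hm.1 hrho).2.1
    have : csum (lam 1) A d i = 1 := by
      rw [← hb2, v] at *
      assumption
    exact this
  · intro hcs
    have hi : 1 ≤ i ∧ i ≤ n := by
      by_contra h
      have := csum_out hA (i := i) h d
      omega
    have hmemi : i ∈ (Finset.Icc 1 i).filter (fun i' => csum (lam 1) A d i' = 1) := by
      simp only [Finset.mem_filter, Finset.mem_Icc]
      exact ⟨⟨hi.1, le_rfl⟩, hcs⟩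
    have hr1' : 1 ≤ DcardJW (lam 1) A d i := by
      unfold DcardJW
      exact Finset.card_pos.2 ⟨i, hmemi⟩
    set r := DcardJW (lam 1) A d i with hr
    have hr1 : 1 ≤ r := hr1'
    have hrrho : r ≤ rhoJW lam n d := by
      rw [← Dcard_top hG hA hd1]
      exact Dcard_mono d hi.2
    have hf := pick_facts hG hA hd1 hr1 hrrho
    have hle : pickJW (lam 1) A d r ≤ i := pick_min (pick_ex hG hA hd1 hrrho) (by omega)
    have hDsucc := Dcard_succ (m := lam 1) (A := A) d (i - 1)
    rw [(by omega : i - 1 + 1 = i), if_pos hcs] at hDsucc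
    have hpicki : pickJW (lam 1) A d r = i := by
      by_contra hne
      have hlt : pickJW (lam 1) A d r ≤ i - 1 := by omega
      have := Dcard_mono (m := lam 1) (A := A) d hlt
      omega
    have hrn : r ≤ n := le_trans hrrho rho_le_n
    have hmem : bxp r d ∈ sBoxes lam n :=
      bxp_mem hG hr1 hrn hd1 ((mem_rho hG hr1 hrn).2 hrrho)
    refine ⟨⟨bxp r d, hmem⟩, by dsimp [bxp]; omega, ?_⟩
    have v := stOf_val hG hA ⟨bxp r d, hmem⟩
    dsimp only [bxp] at v ⊢
    rw [(show r + d - 1 + 1 - r = d by omega)] at v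
    omega

theorem asm_stOf (hG : GoodJW lam n) (hA : IsAsm lam n (lam 1) A) :
    asmOf lam n (lam 1) (stOfJW lam n A hG hA) = A := by
  funext i j
  by_cases hgrid : 1 ≤ i ∧ i ≤ n ∧ 1 ≤ j ∧ j ≤ lam 1
  · have hsplit := csum_split (A := A) (hgrid.2.2.2) i
    by_cases hjm : j = lam 1
    · have hnd : ¬ DiagHas lam n (stOfJW lam n A hG hA) (j + 1) i :=
        not_diagHas_of_gt hG _ (by omega)
      have hcs1 : csum (lam 1) A (j + 1) i = 0 := csum_empty (by omega) i
      have hD := diagHas_stOf hG hA (d := j) hgrid.2.2.1 (by omega) (i := i)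
      simp only [asmOf]
      rw [if_pos hgrid]
      rcases (csum_prop hA j i).2.2 with h | h
      · have hD0 : ¬ DiagHas lam n (stOfJW lam n A hG hA) j i := by rw [hD]; omega
        rw [if_neg, if_neg]
        · omega
        · rintro ⟨hlt, _, _⟩; omega
        · rintro (⟨_, hc⟩ | ⟨hlt, _, _⟩)
          · exact hD0 (by rw [hjm]; exact hc)
          · omega
      · have hD1 : DiagHas lam n (stOfJW lam n A hG hA) j i := hD.2 h
        rw [if_pos (Or.inl ⟨hjm, by rw [← hjm]; exact hD1⟩)]
        omega
    · have hjlt : j < lam 1 := by omega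
      have hD := diagHas_stOf hG hA (d := j) hgrid.2.2.1 (by omega) (i := i)
      have hD' := diagHas_stOf hG hA (d := j + 1) (by omega) (by omega) (i := i)
      simp only [asmOf]
      rw [if_pos hgrid]
      rcases (csum_prop hA j i).2.2 with h | h <;>
        rcases (csum_prop hA (j + 1) i).2.2 with h' | h'
      · have a1 : ¬ DiagHas lam n (stOfJW lam n A hG hA) j i := by rw [hD]; omega
        have a2 : ¬ DiagHas lam n (stOfJW lam n A hG hA) (j + 1) i := by rw [hD']; omega
        rw [if_neg, if_neg]
        · omega
        · rintro ⟨_, hc, _⟩; exact a2 hc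
        · rintro (⟨he, _⟩ | ⟨_, hc, _⟩)
          · omega
          · exact a1 hc
      · have a1 : ¬ DiagHas lam n (stOfJW lam n A hG hA) j i := by rw [hD]; omega
        have a2 : DiagHas lam n (stOfJW lam n A hG hA) (j + 1) i := hD'.2 h'
        rw [if_neg, if_pos ⟨hjlt, a2, a1⟩]
        · omega
        · rintro (⟨he, _⟩ | ⟨_, _, hc⟩)
          · omega
          · exact hc a2
      · have a1 : DiagHas lam n (stOfJW lam n A hG hA) j i := hD.2 h
        have a2 : ¬ DiagHas lam n (stOfJW lam n A hG hA) (j + 1) i := by rw [hD']; omega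
        rw [if_pos (Or.inr ⟨hjlt, a1, a2⟩)]
        omega
      · have a1 : DiagHas lam n (stOfJW lam n A hG hA) j i := hD.2 h
        have a2 : DiagHas lam n (stOfJW lam n A hG hA) (j + 1) i := hD'.2 h'
        rw [if_neg, if_neg]
        · omega
        · rintro ⟨_, _, hc⟩; exact hc a1
        · rintro (⟨he, _⟩ | ⟨_, _, hc⟩)
          · omega
          · exact hc a2
  · rw [asmOf_out lam n (lam 1) _ hgrid, hA.1 i j hgrid]

end AuxJW8

/-- for a strict partition `λ` of length `n` and breadth `m = λ_1`,
the map `S ↦ asmOf S` is a bijection between the shifted tableaux `S^λ([n])` and the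
alternating sign matrices of class `A^λ`. -/
theorem shifted_tableaux_equiv_asm (n : ℕ) (hn : 1 ≤ n) (lam : ℕ → ℕ)
    (hstrict : ∀ i j, 1 ≤ i → i < j → j ≤ n → lam j < lam i) (hpos : 1 ≤ lam n)
    (hlen : ∀ i, n < i → lam i = 0) :
    Set.BijOn (asmOf lam n (lam 1)) {S | IsSt lam n S} {A | IsAsm lam n (lam 1) A} := by
  have hG : GoodJW lam n := ⟨hn, hstrict, hpos, hlen⟩
  refine ⟨?_, ?_, ?_⟩
  · intro S hS
    exact mapsTo_asm hG hS
  · intro S hS S' hS' h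
    exact inj_asm hG hS hS' h
  · intro A hA
    exact ⟨stOfJW lam n A hG hA, isSt_stOf hG hA, asm_stOf hG hA⟩
end
end
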